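/- arXiv:2106.12249 — 9 statements merged into one kernel-verified Lean document; each statement's English description precedes it below -/
import Mathlib

section
/- If G is an A-Stick graph and c ≺° d holds for vertices c, d of G (where ≺° is the relation generated by the rules (O),(A),(TB),(FB),(T)), then (c, d) is a forced pair: c precedes d in every A-Stick order of G. -/
open Sum

/-- The relation `≺°` generated by the rules (O), (A), (TB), (FB), (T). -/
inductive Prec (n : ℕ) (β : Type) (E : Fin n → β → Prop) (k : β → Fin n) :
    (Fin n ⊕ β) → (Fin n ⊕ β) → Prop
  | O : ∀ {i j : Fin n}, i < j → Prec n β E k (inl i) (inl j)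
  | A : ∀ {t : Fin n} {j : β}, E t j → Prec n β E k (inl t) (inr j)
  | TB : ∀ {s t : Fin n} {h j : β}, s < t → t < k j → E s j → ¬ E t j → E t h →
      Prec n β E k (inr h) (inr j)
  | FB : ∀ {t : Fin n} {w h j : β}, Prec n β E k (inr w) (inr j) → k j < t → E t w →
      E t h → Prec n β E k (inr h) (inr j)
  | T : ∀ {p q r : Fin n ⊕ β}, Prec n β E k p q → Prec n β E k q r → Prec n β E k p r
/-- A Stick order for `G = (A ∪ B, E)`: a linear (strict total) order on `A ∪ B` such that
every `A`-endpoint of an edge precedes its `B`-endpoint, and there is no forbidden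
configuration `a' ≺ a ≺ b ≺ b'` with `a'b ∈ E`, `ab' ∈ E`, `ab ∉ E`. -/
def IsStickOrder (n : ℕ) (β : Type) (E : Fin n → β → Prop)
    (r : (Fin n ⊕ β) → (Fin n ⊕ β) → Prop) : Prop :=
  IsStrictTotalOrder (Fin n ⊕ β) r ∧
  (∀ (a : Fin n) (b : β), E a b → r (inl a) (inr b)) ∧
  ¬ ∃ (a a' : Fin n) (b b' : β),
      r (inl a') (inl a) ∧ r (inl a) (inr b) ∧ r (inr b) (inr b') ∧
      E a' b ∧ E a b' ∧ ¬ E a b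

/-- An A-Stick order: a Stick order whose restriction to `A` is the given order. -/
def IsAStickOrder (n : ℕ) (β : Type) (E : Fin n → β → Prop)
    (r : (Fin n ⊕ β) → (Fin n ⊕ β) → Prop) : Prop :=
  IsStickOrder n β E r ∧ ∀ i j : Fin n, r (inl i) (inl j) ↔ i < j

/- Both branching rules are instances of one observation: if `a' ≺ a ≺ b` with `a'b ∈ E`,
`ab ∉ E` and `ab' ∈ E`, then `b' ≺ b`, since `b ≺ b'` would be the forbidden configuration.
For (TB) take `a' = a_s`, `a = a_t`, `b = b_j`, where `a_t ≺ a_{k_j} ≺ b_j`; for (FB) take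
`a' = a_{k_j}`, `a = a_t`, `b = b_j`, where `a_t ≺ b_w ≺ b_j` by induction and `a_t b_j ∉ E`
because `t > k_j`. -/

theorem IsStickOrder.inr_rel_inr_of_not_edge {n : ℕ} {β : Type} {E : Fin n → β → Prop}
    {r : (Fin n ⊕ β) → (Fin n ⊕ β) → Prop} (hr : IsStickOrder n β E r)
    {a a' : Fin n} {b b' : β} (ha'a : r (inl a') (inl a)) (hab : r (inl a) (inr b))
    (ha'b : E a' b) (hab' : E a b') (hnab : ¬ E a b) : r (inr b') (inr b) := by
  obtain ⟨hto, -, hforb⟩ := hr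
  by_contra hb'b
  have hne : b' ≠ b := fun h => hnab (h ▸ hab')
  exact hne <| inr_injective <| hto.trichotomous _ _ hb'b fun hbb' =>
    hforb ⟨a, a', b, b', ha'a, hab, hbb', ha'b, hab', hnab⟩

theorem stmt0_general (n : ℕ) (β : Type) (E : Fin n → β → Prop) (k : β → Fin n)
    (hk : ∀ j : β, E (k j) j ∧ ∀ i : Fin n, E i j → i ≤ k j)
    (c d : Fin n ⊕ β) (hcd : Prec n β E k c d) :
    ∀ r, IsAStickOrder n β E r → r c d := by
  rintro r ⟨hr, hrA⟩
  have htrans : ∀ {x y z}, r x y → r y z → r x z := hr.1.trans _ _ _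
  induction hcd with
  | O hij => exact (hrA _ _).2 hij
  | A hE => exact hr.2.1 _ _ hE
  | TB hst htk hsj htj hth =>
    exact hr.inr_rel_inr_of_not_edge ((hrA _ _).2 hst)
      (htrans ((hrA _ _).2 htk) (hr.2.1 _ _ (hk _).1)) hsj hth htj
  | @FB t w h j _ hkt htw hth hwj =>
    have htj : ¬ E t j := fun hE => (hk j).2 t hE |>.not_gt hkt
    exact hr.inr_rel_inr_of_not_edge ((hrA _ _).2 hkt) (htrans (hr.2.1 _ _ htw) hwj)
      (hk j).1 hth htj
  | T _ _ ih₁ ih₂ => exact htrans ih₁ ih₂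

/-- If `G` is an A-Stick graph and `c ≺° d`, then `(c, d)` is a forced pair:
`c` precedes `d` in every A-Stick order of `G`. -/
theorem stmt0 (n : ℕ) (β : Type) [Fintype β] (E : Fin n → β → Prop) (k : β → Fin n)
    (hk : ∀ j : β, E (k j) j ∧ ∀ i : Fin n, E i j → i ≤ k j)
    (hA : ∃ r, IsAStickOrder n β E r)
    (c d : Fin n ⊕ β) (hcd : Prec n β E k c d) :
    ∀ r, IsAStickOrder n β E r → r c d :=
  stmt0_general n β E k hk c d hcd
end

section
/- For a_t ∈ A and b_j ∈ B, the relation a_t ≺° b_j holds if and only if: (a) a_t b_j ∈ E; or (b) there exists b_q ∈ B with a_t b_q ∈ E and b_q ≺° b_j; or (c) there exists r > t with a_r ≺° b_j. -/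
/-!
Apart from (T), only rule (O) has its right side in `A`, so anything below `a_r` is some `a_i`
with `i < r`. Hence a derivation of `a_t ≺° b_j` either is an instance of (A), or splits by (T)
through some `a_r`, with `t < r`, or through some `b_q`; in the last case induction on the first
half gives `a_t b_q ∈ E` directly or a witness that composes with `b_q ≺° b_j`.
-/

open Sum

namespace Prec

variable {n : ℕ} {β : Type} {E : Fin n → β → Prop} {k : β → Fin n}

theorem exists_eq_inl_lt_of_inl_right {p : Fin n ⊕ β} {r : Fin n}
    (h : Prec n β E k p (inl r)) : ∃ i : Fin n, p = inl i ∧ i < r := by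
  generalize hq : (inl r : Fin n ⊕ β) = q at h
  induction h generalizing r with
  | @O i _ hij => cases hq; exact ⟨i, rfl, hij⟩
  | A _ | TB _ _ _ _ _ | FB _ _ _ _ => cases hq
  | T _ _ ih₁ ih₂ =>
    obtain ⟨s, rfl, hsr⟩ := ih₂ hq
    obtain ⟨i, rfl, his⟩ := ih₁ rfl
    exact ⟨i, rfl, his.trans hsr⟩

theorem inl_inr_cases {t : Fin n} {j : β} (h : Prec n β E k (inl t) (inr j)) :
    E t j ∨
      (∃ q : β, E t q ∧ Prec n β E k (inr q) (inr j)) ∨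
      (∃ r : Fin n, t < r ∧ Prec n β E k (inl r) (inr j)) := by
  generalize hp : (inl t : Fin n ⊕ β) = p at h
  generalize hq : (inr j : Fin n ⊕ β) = q at h
  induction h generalizing t j with
  | O _ => cases hq
  | A hE => cases hp; cases hq; exact Or.inl hE
  | TB _ _ _ _ _ | FB _ _ _ _ => cases hp
  | @T _ m _ h₁ h₂ ih₁ _ =>
    subst hp hq
    cases m with
    | inl r =>
      obtain ⟨i, hi, htr⟩ := h₁.exists_eq_inl_lt_of_inl_right
      cases hi
      exact Or.inr (Or.inr ⟨r, htr, h₂⟩)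
    | inr b =>
      rcases ih₁ rfl rfl with hE | ⟨q, hE, hqb⟩ | ⟨r, htr, hrb⟩
      · exact Or.inr (Or.inl ⟨b, hE, h₂⟩)
      · exact Or.inr (Or.inl ⟨q, hE, hqb.T h₂⟩)
      · exact Or.inr (Or.inr ⟨r, htr, hrb.T h₂⟩)

end Prec

theorem stmt2_general (n : ℕ) (β : Type) (E : Fin n → β → Prop) (k : β → Fin n)
    (t : Fin n) (j : β) :
    Prec n β E k (inl t) (inr j) ↔
      E t j ∨
      (∃ q : β, E t q ∧ Prec n β E k (inr q) (inr j)) ∨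
      (∃ r : Fin n, t < r ∧ Prec n β E k (inl r) (inr j)) := by
  refine ⟨Prec.inl_inr_cases, ?_⟩
  rintro (hE | ⟨q, hE, hqj⟩ | ⟨r, htr, hrj⟩)
  · exact Prec.A hE
  · exact (Prec.A hE).T hqj
  · exact (Prec.O htr).T hrj

/-- For `a_t ∈ A` and `b_j ∈ B`, `a_t ≺° b_j` holds iff (a) `a_t b_j ∈ E`,
or (b) `a_t b_q ∈ E` for some `b_q` with `b_q ≺° b_j`, or (c) `a_r ≺° b_j` for some `r > t`. -/
theorem stmt2 (n : ℕ) (β : Type) [Fintype β] (E : Fin n → β → Prop) (k : β → Fin n)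
    (hk : ∀ j : β, E (k j) j ∧ ∀ i : Fin n, E i j → i ≤ k j)
    (t : Fin n) (j : β) :
    Prec n β E k (inl t) (inr j) ↔
      E t j ∨
      (∃ q : β, E t q ∧ Prec n β E k (inr q) (inr j)) ∨
      (∃ r : Fin n, t < r ∧ Prec n β E k (inl r) (inr j)) :=
  stmt2_general n β E k t j
end

section
/- For b_h, b_j ∈ B, the relation b_h ≺° b_j holds if and only if one of the following holds: (1) b_h is a basis of b_j; (2) b_h is a j-descendant of a basis of b_j; (3) there exists b_q ∈ B with b_q ≺° b_j such that b_h is a basis of b_q; (4) there exists b_q ∈ B with b_q ≺° b_j such that b_h is a q-descendant of a basis of b_q. -/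
/-!
On `B`, `≺°` is the transitive closure of "`b_h` is a basis of `b_q` or a `q`-descendant of a
basis of `b_q`"; the four cases of the theorem unfold one step of that closure. The nontrivial
point is that the set `X_j` of vertices below `b_j` in the closure is stable under (FB). We prove
more, by induction on the derivation of `x ∈ X_j`, with `q` the vertex `x` was derived from:
if `a_t b_h ∈ E` and `k_j < t ≤ k_x`, then `b_h ∈ X_j`. Either `a_t b_x ∈ E`, and `b_h` is one more
`q`-descendant step from `x` (if `k_q < t`) or we recurse to `q`; or `x` has a neighbor before
`a_t`, and `b_h` is a basis of `x`; or all neighbors of `x` lie after `a_t`, and then the vertex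
`x` was derived from (`q`, or the previous vertex of the descendant chain) again satisfies
`k_j < t ≤ k_·`.
-/

open Sum

/-- `b_h` is a basis of `b_j`: there are `s < t < k_j` with `a_s b_j ∈ E`, `a_t b_j ∉ E`
and `a_t b_h ∈ E`. -/
def IsBasis (n : ℕ) (β : Type) (E : Fin n → β → Prop) (k : β → Fin n) (h j : β) : Prop :=
  ∃ s t : Fin n, s < t ∧ t < k j ∧ E s j ∧ ¬ E t j ∧ E t h

/-- `b_h` is a `j`-descendant of `b_w`: a chain `b_w = b_{u_1}, …, b_{u_g} = b_h` (g ≥ 2)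
where consecutive elements have a common neighbor `a_t` with `t > k_j`. -/
def IsDescendant (n : ℕ) (β : Type) (E : Fin n → β → Prop) (k : β → Fin n)
    (j w h : β) : Prop :=
  Relation.TransGen (fun w' h' => ∃ t : Fin n, k j < t ∧ E t w' ∧ E t h') w h

open Relation

variable {n : ℕ} {β : Type} {E : Fin n → β → Prop} {k : β → Fin n}

def DescendantStep (E : Fin n → β → Prop) (k : β → Fin n) (j w h : β) : Prop :=
  ∃ t, k j < t ∧ E t w ∧ E t h

def IsBasisOrDescendant (E : Fin n → β → Prop) (k : β → Fin n) (h q : β) : Prop :=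
  ∃ v, IsBasis n β E k v q ∧ ReflTransGen (DescendantStep E k q) v h

theorem isBasisOrDescendant_iff {h q : β} :
    IsBasisOrDescendant E k h q ↔
      IsBasis n β E k h q ∨ ∃ v, IsBasis n β E k v q ∧ IsDescendant n β E k q v h := by
  simp only [IsBasisOrDescendant, reflTransGen_iff_eq_or_transGen, and_or_left, exists_or,
    exists_eq_right']
  rfl

theorem IsBasis.isBasisOrDescendant {h q : β} (hb : IsBasis n β E k h q) :
    IsBasisOrDescendant E k h q :=
  ⟨h, hb, .refl⟩

theorem IsBasisOrDescendant.tail {w h q : β} (hw : IsBasisOrDescendant E k w q)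
    (hs : DescendantStep E k q w h) : IsBasisOrDescendant E k h q :=
  let ⟨v, hv, hvw⟩ := hw
  ⟨v, hv, hvw.tail hs⟩

theorem Prec.of_isBasis {h j : β} (hb : IsBasis n β E k h j) : Prec n β E k (inr h) (inr j) :=
  let ⟨_, _, hst, htj, hsj, htj', hth⟩ := hb
  .TB hst htj hsj htj' hth

theorem Prec.of_isBasisOrDescendant {h j : β} (hb : IsBasisOrDescendant E k h j) :
    Prec n β E k (inr h) (inr j) := by
  obtain ⟨v, hv, hvh⟩ := hb
  induction hvh with
  | refl => exact .of_isBasis hv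
  | tail _ hs ih =>
    obtain ⟨t, hjt, htw, hth⟩ := hs
    exact .FB ih hjt htw hth

theorem Prec.of_transGen {h j : β} (hhj : TransGen (IsBasisOrDescendant E k) h j) :
    Prec n β E k (inr h) (inr j) := by
  induction hhj with
  | single hb => exact .of_isBasisOrDescendant hb
  | tail _ hb ih => exact .T ih (.of_isBasisOrDescendant hb)

theorem Prec.not_inr_inl {h : β} {i : Fin n} : ¬ Prec n β E k (inr h) (inl i) := by
  suffices ∀ x y, Prec n β E k x y → ∀ h i, x = inr h → y = inl i → False from
    fun hp => this _ _ hp h i rfl rfl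
  intro x y hp
  induction hp with
  | O | A | TB | FB => simp
  | @T p q r _ _ ih₁ ih₂ =>
    rintro h i rfl rfl
    rcases q with i' | b
    · exact ih₁ h i' rfl rfl
    · exact ih₂ b i rfl rfl

section Closure

variable (hk : ∀ j : β, E (k j) j ∧ ∀ i : Fin n, E i j → i ≤ k j)
include hk

theorem isBasis_or_forall_lt_of_le {t : Fin n} {h x : β} (htx : t ≤ k x) (hth : E t h) :
    E t x ∨ IsBasis n β E k h x ∨ ∀ s, E s x → t < s := by
  by_cases htx' : E t x
  · exact .inl htx'
  by_cases hs : ∃ s < t, E s x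
  · obtain ⟨s, hst, hsx⟩ := hs
    have htx : t < k x := htx.lt_of_ne fun hteq => htx' (hteq ▸ (hk x).1)
    exact .inr (.inl ⟨s, t, hst, htx, hsx, htx', hth⟩)
  · refine .inr (.inr fun s hsx => ?_)
    rcases lt_trichotomy s t with hst | rfl | hts
    · exact absurd ⟨s, hst, hsx⟩ hs
    · exact absurd hsx htx'
    · exact hts

theorem transGen_of_lt_of_le_of_isBasisOrDescendant {j q x : β}
    (hq : ∀ y, IsBasisOrDescendant E k y q → TransGen (IsBasisOrDescendant E k) y j)
    (ihq : ∀ t h, k j < t → t ≤ k q → E t h → TransGen (IsBasisOrDescendant E k) h j)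
    (hx : IsBasisOrDescendant E k x q) :
    ∀ t h, k j < t → t ≤ k x → E t h → TransGen (IsBasisOrDescendant E k) h j := by
  have of_forall_lt : ∀ x, IsBasisOrDescendant E k x q →
      (∀ t h, k j < t → (∀ s, E s x → t < s) → E t h →
        TransGen (IsBasisOrDescendant E k) h j) →
      ∀ t h, k j < t → t ≤ k x → E t h → TransGen (IsBasisOrDescendant E k) h j := by
    intro x hx hlt t h hjt htx hth
    rcases isBasis_or_forall_lt_of_le hk htx hth with htx' | hb | hts
    · rcases lt_or_ge (k q) t with hqt | htq
      · exact hq h (hx.tail ⟨t, hqt, htx', hth⟩)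
      · exact ihq t h hjt htq hth
    · exact .head hb.isBasisOrDescendant (hq x hx)
    · exact hlt t h hjt hts hth
  obtain ⟨v, hv, hvx⟩ := hx
  induction hvx with
  | refl =>
    refine of_forall_lt v hv.isBasisOrDescendant fun t h hjt hts hth => ?_
    obtain ⟨_, τ, _, hτq, _, _, hτv⟩ := hv
    exact ihq t h hjt ((hts τ hτv).trans hτq).le hth
  | @tail y x hvy hyx ih =>
    refine of_forall_lt x ⟨v, hv, hvy.tail hyx⟩ fun t h hjt hts hth => ?_
    obtain ⟨r, _, hry, hrx⟩ := hyx
    exact ih t h hjt ((hts r hrx).le.trans ((hk y).2 r hry)) hth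

theorem transGen_of_lt_of_le {j x : β} (hx : TransGen (IsBasisOrDescendant E k) x j) :
    ∀ t h, k j < t → t ≤ k x → E t h → TransGen (IsBasisOrDescendant E k) h j := by
  induction hx using TransGen.head_induction_on with
  | single hxj =>
    refine transGen_of_lt_of_le_of_isBasisOrDescendant hk (fun _ => .single) ?_ hxj
    exact fun t _ hjt htj _ => absurd hjt htj.not_gt
  | head hxq hqj ihq =>
    exact transGen_of_lt_of_le_of_isBasisOrDescendant hk (fun _ hy => .head hy hqj) ihq hxq

theorem TransGen.isBasisOrDescendant_of_descendantStep {j w h : β}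
    (hw : TransGen (IsBasisOrDescendant E k) w j) (hs : DescendantStep E k j w h) :
    TransGen (IsBasisOrDescendant E k) h j :=
  let ⟨t, hjt, htw, hth⟩ := hs
  transGen_of_lt_of_le hk hw t h hjt ((hk w).2 t htw) hth

theorem Prec.transGen {h j : β} (hp : Prec n β E k (inr h) (inr j)) :
    TransGen (IsBasisOrDescendant E k) h j := by
  suffices ∀ x y, Prec n β E k x y → ∀ h j, x = inr h → y = inr j →
      TransGen (IsBasisOrDescendant E k) h j from this _ _ hp h j rfl rfl
  intro x y hp
  induction hp with
  | O | A => simp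
  | TB hst htj hsj htj' hth =>
    rintro h j ⟨⟩ ⟨⟩
    exact .single (IsBasis.isBasisOrDescendant ⟨_, _, hst, htj, hsj, htj', hth⟩)
  | FB _ hjt htw hth ih =>
    rintro h j ⟨⟩ ⟨⟩
    exact TransGen.isBasisOrDescendant_of_descendantStep hk (ih _ _ rfl rfl) ⟨_, hjt, htw, hth⟩
  | @T p q r hpq _ ih₁ ih₂ =>
    rintro h j rfl rfl
    rcases q with i | b
    · exact absurd hpq Prec.not_inr_inl
    · exact (ih₁ h b rfl rfl).trans (ih₂ b j rfl rfl)

theorem prec_inr_inr_iff {h j : β} :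
    Prec n β E k (inr h) (inr j) ↔ TransGen (IsBasisOrDescendant E k) h j :=
  ⟨Prec.transGen hk, Prec.of_transGen⟩

end Closure

theorem stmt3_general (n : ℕ) (β : Type) (E : Fin n → β → Prop) (k : β → Fin n)
    (hk : ∀ j : β, E (k j) j ∧ ∀ i : Fin n, E i j → i ≤ k j)
    (h j : β) :
    Prec n β E k (inr h) (inr j) ↔
      IsBasis n β E k h j ∨
      (∃ v : β, IsBasis n β E k v j ∧ IsDescendant n β E k j v h) ∨
      (∃ q : β, Prec n β E k (inr q) (inr j) ∧ IsBasis n β E k h q) ∨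
      (∃ q : β, Prec n β E k (inr q) (inr j) ∧
        ∃ v : β, IsBasis n β E k v q ∧ IsDescendant n β E k q v h) := by
  rw [prec_inr_inr_iff hk, TransGen.head'_iff]
  simp only [reflTransGen_iff_eq_or_transGen, ← prec_inr_inr_iff hk, and_or_left, exists_or,
    exists_eq_right', isBasisOrDescendant_iff, or_and_right]
  simp only [or_assoc, and_comm]

/-- For `b_h, b_j ∈ B`, `b_h ≺° b_j` holds iff (1) `b_h` is a basis of `b_j`,
or (2) `b_h` is a `j`-descendant of a basis of `b_j`, or (3) `b_h` is a basis of some `b_q`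
with `b_q ≺° b_j`, or (4) `b_h` is a `q`-descendant of a basis of some `b_q` with `b_q ≺° b_j`. -/
theorem stmt3 (n : ℕ) (β : Type) [Fintype β] (E : Fin n → β → Prop) (k : β → Fin n)
    (hk : ∀ j : β, E (k j) j ∧ ∀ i : Fin n, E i j → i ≤ k j)
    (h j : β) :
    Prec n β E k (inr h) (inr j) ↔
      IsBasis n β E k h j ∨
      (∃ v : β, IsBasis n β E k v j ∧ IsDescendant n β E k j v h) ∨
      (∃ q : β, Prec n β E k (inr q) (inr j) ∧ IsBasis n β E k h q) ∨
      (∃ q : β, Prec n β E k (inr q) (inr j) ∧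
        ∃ v : β, IsBasis n β E k v q ∧ IsDescendant n β E k q v h) :=
  stmt3_general n β E k hk h j
end

section
/- The rule sets R = {(O),(A),(TB),(FB),(T)} and R' = {(O),(A),(TB),(FB'),(T)} generate the same relation on A ∪ B: a pair c ≺° d is derivable from the rules of R if and only if it is derivable from the rules of R'. -/
/-
Every rule of `R` is derivable in `R'`: from `b_w ≺° b_j` and `a_t b_w ∈ E`, rules (A) and (T) give
`a_t ≺° b_j`, so (FB) is an instance of (FB'). Conversely (FB') is admissible in `R`. The key fact is
that (FB) may be applied to `b_w ≺° b_j` as soon as `t ≤ k_w`, even if `a_t b_w ∉ E`. If `b_w` has a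
neighbour `a_u` with `u < t`, then `a_t` is either a neighbour of `b_w` or a gap of `N(b_w)`, and (FB)
or (TB) applies directly; otherwise, by induction on the derivation of `b_w ≺° b_j`, one descends to
the premise `b_W ≺° b_j` of its last (FB) step, for which `t ≤ u ≤ k_W`, or splits a (T) step at the
middle vertex `b_x` according to whether `t ≤ k_x`. Finally, a derivation of `a_t ≺° b_j` with
`k_j < t` leaves `A` through some `b_x ≺° b_j` with `t ≤ k_x`.
-/

open Sum

/-- The relation generated by the rules (O), (A), (TB), (FB'), (T), where rule (FB') reads:
if `a_t ≺° b_j`, `k_j < t` and `a_t b_h ∈ E`, then `b_h ≺° b_j`. -/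
inductive Prec' (n : ℕ) (β : Type) (E : Fin n → β → Prop) (k : β → Fin n) :
    (Fin n ⊕ β) → (Fin n ⊕ β) → Prop
  | O : ∀ {i j : Fin n}, i < j → Prec' n β E k (inl i) (inl j)
  | A : ∀ {t : Fin n} {j : β}, E t j → Prec' n β E k (inl t) (inr j)
  | TB : ∀ {s t : Fin n} {h j : β}, s < t → t < k j → E s j → ¬ E t j → E t h →
      Prec' n β E k (inr h) (inr j)
  | FB' : ∀ {t : Fin n} {h j : β}, Prec' n β E k (inl t) (inr j) → k j < t →
      E t h → Prec' n β E k (inr h) (inr j)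
  | T : ∀ {p q r : Fin n ⊕ β}, Prec' n β E k p q → Prec' n β E k q r → Prec' n β E k p r

namespace Prec

variable {n : ℕ} {β : Type} {E : Fin n → β → Prop} {k : β → Fin n}

theorem exists_eq_inl_lt {p : Fin n ⊕ β} {i : Fin n} (h : Prec n β E k p (inl i)) :
    ∃ i' < i, p = inl i' := by
  generalize hq : (inl i : Fin n ⊕ β) = q at h
  induction h generalizing i with
  | O hij => cases hq; exact ⟨_, hij, rfl⟩
  | A | TB | FB => cases hq
  | T _ _ ih₁ ih₂ =>
    obtain ⟨i₁, hi₁, rfl⟩ := ih₂ hq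
    obtain ⟨i₀, hi₀, rfl⟩ := ih₁ rfl
    exact ⟨i₀, hi₀.trans hi₁, rfl⟩

theorem not_inr_inl_s6 {w : β} {i : Fin n} : ¬ Prec n β E k (inr w) (inl i) := fun h => by
  obtain ⟨_, _, h⟩ := h.exists_eq_inl_lt
  cases h

theorem fb_of_adj_lt {w j h : β} {u t : Fin n} (hkw : E (k w) w)
    (hwj : Prec n β E k (inr w) (inr j)) (hjt : k j < t) (hut : u < t) (htw : t ≤ k w)
    (huw : E u w) (hth : E t h) : Prec n β E k (inr h) (inr j) := by
  by_cases hEtw : E t w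
  · exact FB hwj hjt hEtw hth
  · have htw' : t < k w := htw.lt_of_ne fun h => hEtw (h ▸ hkw)
    exact T (TB hut htw' huw hEtw hth) hwj

theorem fb_of_le_k (hk : ∀ j : β, E (k j) j ∧ ∀ i : Fin n, E i j → i ≤ k j)
    {w j h : β} {t : Fin n} (hwj : Prec n β E k (inr w) (inr j)) (hjt : k j < t)
    (htw : t ≤ k w) (hth : E t h) : Prec n β E k (inr h) (inr j) := by
  generalize hp : (inr w : Fin n ⊕ β) = p at hwj
  generalize hq : (inr j : Fin n ⊕ β) = q at hwj
  induction hwj generalizing w j with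
  | O | A => cases hp
  | @TB _ u w j hsu huj hsj hnuj huw =>
    cases hp; cases hq
    exact fb_of_adj_lt (hk w).1 (TB hsu huj hsj hnuj huw) hjt (huj.trans hjt) htw huw hth
  | @FB u W w j hWj hju huW huw ih =>
    cases hp; cases hq
    by_cases hut : u < t
    · exact fb_of_adj_lt (hk w).1 (FB hWj hju huW huw) hjt hut htw huw hth
    · exact ih hjt ((not_lt.1 hut).trans ((hk _).2 _ huW)) rfl rfl
  | @T _ x _ hwx hxj ih₁ ih₂ =>
    subst hp hq
    rcases x with i | x
    · exact absurd hwx not_inr_inl_s6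
    by_cases htx : t ≤ k x
    · exact ih₂ hjt htx rfl rfl
    · exact T (ih₁ (not_le.1 htx) htw rfl rfl) hxj

theorem fb'_of_le (hk : ∀ j : β, E (k j) j ∧ ∀ i : Fin n, E i j → i ≤ k j)
    {s t : Fin n} {h j : β} (hsj : Prec n β E k (inl s) (inr j)) (hts : t ≤ s) (hjt : k j < t)
    (hth : E t h) : Prec n β E k (inr h) (inr j) := by
  generalize hp : (inl s : Fin n ⊕ β) = p at hsj
  generalize hq : (inr j : Fin n ⊕ β) = q at hsj
  induction hsj generalizing s j with
  | O | TB | FB => cases hq <;> cases hp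
  | A hsj =>
    cases hp; cases hq
    exact absurd (hts.trans ((hk _).2 _ hsj)) (not_le.2 hjt)
  | @T _ x _ hsx hxj ih₁ ih₂ =>
    subst hp hq
    rcases x with i | x
    · obtain ⟨_, hsi, hs⟩ := hsx.exists_eq_inl_lt
      cases hs
      exact ih₂ (hts.trans hsi.le) hjt rfl rfl
    by_cases htx : t ≤ k x
    · exact fb_of_le_k hk hxj hjt htx hth
    · exact T (ih₁ hts (not_le.1 htx) rfl rfl) hxj

theorem toPrec' {p q : Fin n ⊕ β} (h : Prec n β E k p q) : Prec' n β E k p q := by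
  induction h with
  | O hij => exact Prec'.O hij
  | A hE => exact Prec'.A hE
  | TB hst htk hsj htj hth => exact Prec'.TB hst htk hsj htj hth
  | FB _ hjt htw hth ih => exact Prec'.FB' (Prec'.T (Prec'.A htw) ih) hjt hth
  | T _ _ ih₁ ih₂ => exact Prec'.T ih₁ ih₂

end Prec

theorem Prec'.toPrec {n : ℕ} {β : Type} {E : Fin n → β → Prop} {k : β → Fin n}
    (hk : ∀ j : β, E (k j) j ∧ ∀ i : Fin n, E i j → i ≤ k j)
    {p q : Fin n ⊕ β} (h : Prec' n β E k p q) : Prec n β E k p q := by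
  induction h with
  | O hij => exact Prec.O hij
  | A hE => exact Prec.A hE
  | TB hst htk hsj htj hth => exact Prec.TB hst htk hsj htj hth
  | FB' _ hjt hth ih => exact ih.fb'_of_le hk le_rfl hjt hth
  | T _ _ ih₁ ih₂ => exact Prec.T ih₁ ih₂

theorem stmt6_general (n : ℕ) (β : Type) (E : Fin n → β → Prop) (k : β → Fin n)
    (hk : ∀ j : β, E (k j) j ∧ ∀ i : Fin n, E i j → i ≤ k j)
    (c d : Fin n ⊕ β) :
    Prec n β E k c d ↔ Prec' n β E k c d :=
  ⟨Prec.toPrec', Prec'.toPrec hk⟩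

/-- The rule sets `R = {(O),(A),(TB),(FB),(T)}` and
`R' = {(O),(A),(TB),(FB'),(T)}` generate the same relation on `A ∪ B`. -/
theorem stmt6 (n : ℕ) (β : Type) [Fintype β] (E : Fin n → β → Prop) (k : β → Fin n)
    (hk : ∀ j : β, E (k j) j ∧ ∀ i : Fin n, E i j → i ≤ k j)
    (c d : Fin n ⊕ β) :
    Prec n β E k c d ↔ Prec' n β E k c d :=
  stmt6_general n β E k hk c d
end

section
/- The relation ≺° generated by the rule set R' equals S_n; equivalently, every pair c ≺° d admits an increasing forcing sequence, i.e. a derivation by the rules of R' in which the indices of the supports of the successive (TB) and (FB') applications form a nondecreasing sequence. -/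
open Sum

/-- The smallest relation containing `base` and closed under (O), (A), (T), and under those
instances of (TB) and (FB') whose support `a_t` satisfies `allowed t`. -/
inductive Cl (n : ℕ) (β : Type) (E : Fin n → β → Prop) (k : β → Fin n)
    (base : (Fin n ⊕ β) → (Fin n ⊕ β) → Prop) (allowed : Fin n → Prop) :
    (Fin n ⊕ β) → (Fin n ⊕ β) → Prop
  | base : ∀ {x y : Fin n ⊕ β}, base x y → Cl n β E k base allowed x y
  | O : ∀ {i j : Fin n}, i < j → Cl n β E k base allowed (inl i) (inl j)
  | A : ∀ {t : Fin n} {j : β}, E t j → Cl n β E k base allowed (inl t) (inr j)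
  | TB : ∀ {s t : Fin n} {h j : β}, allowed t → s < t → t < k j → E s j → ¬ E t j → E t h →
      Cl n β E k base allowed (inr h) (inr j)
  | FB' : ∀ {t : Fin n} {h j : β}, allowed t → Cl n β E k base allowed (inl t) (inr j) →
      k j < t → E t h → Cl n β E k base allowed (inr h) (inr j)
  | T : ∀ {p q r : Fin n ⊕ β}, Cl n β E k base allowed p q → Cl n β E k base allowed q r →
      Cl n β E k base allowed p r

/-- The relations `S_i`, `0 ≤ i ≤ n`: `S_0` is the smallest relation closed under (O),(A),(T);
`S_i` is the smallest relation containing `S_{i-1}` and closed under (O),(A),(T) and those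
instances of (TB) and (FB') whose support is `a_i` (here `a_i` is the element of `Fin n`
with value `i - 1`). -/
def S (n : ℕ) (β : Type) (E : Fin n → β → Prop) (k : β → Fin n) :
    ℕ → (Fin n ⊕ β) → (Fin n ⊕ β) → Prop
  | 0 => Cl n β E k (fun _ _ => False) (fun _ => False)
  | i + 1 => Cl n β E k (S n β E k i) (fun t => (t : ℕ) = i)

/-!
For each `t`, the set of vertices `x` with `a_t = x` or `a_t S_{t+1} x` is an up-set of `≺°`.
For (TB) with support `a_u` and target `b_j` this holds because either `t ≤ k_j`, and then
`a_t S_{t+1} b_j` via `a_{k_j} b_j ∈ E`, or `u < k_j < t`, so the step already lies in `S_{t+1}`.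
For (FB') with support `a_u`, the invariant for `u` itself turns the premise `a_u ≺° b_j` into
`a_u S_{u+1} b_j`, so the same (FB') step is available in `S_{u+1}`. Applying the invariant to the
premise of every (FB') step rebuilds any derivation of `≺°` inside `S_n`.
-/
open Relation

variable {n : ℕ} {β : Type} {E : Fin n → β → Prop} {k : β → Fin n}

theorem S_monotone : Monotone (S n β E k) :=
  monotone_nat_of_le_succ fun _ _ _ h => Cl.base h

theorem S_O {m : ℕ} {i j : Fin n} (h : i < j) : S n β E k m (inl i) (inl j) := by
  cases m <;> exact Cl.O h

theorem S_A {m : ℕ} {t : Fin n} {j : β} (h : E t j) : S n β E k m (inl t) (inr j) := by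
  cases m <;> exact Cl.A h

theorem S_trans {m : ℕ} {p q r : Fin n ⊕ β} (hpq : S n β E k m p q) (hqr : S n β E k m q r) :
    S n β E k m p r := by
  cases m <;> exact Cl.T hpq hqr

theorem S_TB {s t : Fin n} {h j : β} (hst : s < t) (htj : t < k j) (hsj : E s j)
    (htj' : ¬ E t j) (hth : E t h) : S n β E k (t + 1) (inr h) (inr j) :=
  Cl.TB rfl hst htj hsj htj' hth

theorem S_FB' {t : Fin n} {h j : β} (htj : S n β E k (t + 1) (inl t) (inr j))
    (hkj : k j < t) (hth : E t h) : S n β E k (t + 1) (inr h) (inr j) :=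
  Cl.FB' rfl htj hkj hth

theorem S_inl_inr_of_le {m : ℕ} {t u : Fin n} {j : β} (htu : t ≤ u) (huj : E u j) :
    S n β E k m (inl t) (inr j) := by
  rcases htu.eq_or_lt with rfl | htu
  · exact S_A huj
  · exact S_trans (S_O htu) (S_A huj)

theorem reflGen_S_inl_of_le {m : ℕ} {t u : Fin n} (htu : t ≤ u) :
    ReflGen (S n β E k m) (inl t) (inl u) := by
  rcases htu.eq_or_lt with rfl | htu
  · exact ReflGen.refl
  · exact ReflGen.single (S_O htu)

theorem Prec'.of_Cl {base : (Fin n ⊕ β) → (Fin n ⊕ β) → Prop} {allowed : Fin n → Prop}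
    (hbase : ∀ x y, base x y → Prec' n β E k x y) {x y : Fin n ⊕ β}
    (h : Cl n β E k base allowed x y) : Prec' n β E k x y := by
  induction h with
  | base h => exact hbase _ _ h
  | O h => exact Prec'.O h
  | A h => exact Prec'.A h
  | TB _ hst htj hsj htj' hth => exact Prec'.TB hst htj hsj htj' hth
  | FB' _ _ hkj hth ih => exact Prec'.FB' ih hkj hth
  | T _ _ ih₁ ih₂ => exact Prec'.T ih₁ ih₂

theorem Prec'.of_S {m : ℕ} {x y : Fin n ⊕ β} (h : S n β E k m x y) : Prec' n β E k x y := by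
  induction m generalizing x y with
  | zero => exact Prec'.of_Cl (fun _ _ h => h.elim) h
  | succ m ih => exact Prec'.of_Cl (fun _ _ h => ih h) h

theorem Prec'.reflGen_S_of_reflGen (hk : ∀ j, E (k j) j) {c d : Fin n ⊕ β}
    (hcd : Prec' n β E k c d) (t : Fin n) :
    ReflGen (S n β E k (t + 1)) (inl t) c → ReflGen (S n β E k (t + 1)) (inl t) d := by
  induction hcd generalizing t with
  | O hij =>
    rintro (_ | htc)
    · exact ReflGen.single (S_O hij)
    · exact ReflGen.single (S_trans htc (S_O hij))
  | A hsj =>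
    rintro (_ | htc)
    · exact ReflGen.single (S_A hsj)
    · exact ReflGen.single (S_trans htc (S_A hsj))
  | @TB _ u _ j hsu huj hsj huj' huh =>
    rintro (_ | hth)
    refine ReflGen.single ?_
    rcases le_or_gt t (k j) with htj | hjt
    · exact S_inl_inr_of_le htj (hk j)
    · have hut : (u : ℕ) + 1 ≤ t + 1 := by have := huj.trans hjt; omega
      exact S_trans hth (S_monotone hut _ _ (S_TB hsu huj hsj huj' huh))
  | @FB' u _ j _ hju huh ih =>
    rintro (_ | hth)
    refine ReflGen.single ?_
    rcases le_or_gt t u with htu | hut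
    · rcases ih t (reflGen_S_inl_of_le htu) with _ | htj
      exact htj
    · rcases ih u ReflGen.refl with _ | huj
      have hut : (u : ℕ) + 1 ≤ t + 1 := by omega
      exact S_trans hth (S_monotone hut _ _ (S_FB' huj hju huh))
  | T _ _ ih₁ ih₂ => exact fun htc => ih₂ t (ih₁ t htc)

theorem Prec'.S_succ_of_inl_inr (hk : ∀ j, E (k j) j) {t : Fin n} {j : β}
    (htj : Prec' n β E k (inl t) (inr j)) : S n β E k (t + 1) (inl t) (inr j) := by
  rcases htj.reflGen_S_of_reflGen hk t ReflGen.refl with _ | htj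
  exact htj

theorem stmt9_general (n : ℕ) (β : Type) (E : Fin n → β → Prop) (k : β → Fin n)
    (hk : ∀ j : β, E (k j) j ∧ ∀ i : Fin n, E i j → i ≤ k j)
    (c d : Fin n ⊕ β) :
    Prec' n β E k c d ↔ S n β E k n c d := by
  refine ⟨fun hcd => ?_, Prec'.of_S⟩
  induction hcd with
  | O hij => exact S_O hij
  | A htj => exact S_A htj
  | @TB _ t _ _ hst htj hsj htj' hth => exact S_monotone t.isLt _ _ (S_TB hst htj hsj htj' hth)
  | @FB' t _ _ htj hjt hth =>
    have htj := htj.S_succ_of_inl_inr fun j => (hk j).1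
    exact S_monotone t.isLt _ _ (S_FB' htj hjt hth)
  | T _ _ ih₁ ih₂ => exact S_trans ih₁ ih₂

/-- The relation `≺°` generated by the rule set `R'` equals `S_n`:
every pair `c ≺° d` admits an increasing forcing sequence. -/
theorem stmt9 (n : ℕ) (β : Type) [Fintype β] (E : Fin n → β → Prop) (k : β → Fin n)
    (hk : ∀ j : β, E (k j) j ∧ ∀ i : Fin n, E i j → i ≤ k j)
    (c d : Fin n ⊕ β) :
    Prec' n β E k c d ↔ S n β E k n c d :=
  stmt9_general n β E k hk c d
end

section
/- Let σ_B be a linear order on B. Then G admits a Stick order whose restriction to A is the given order a_1 < … < a_n and whose restriction to B is σ_B if and only if none of the following three configurations occurs: (P1) indices with a_i < a_j < a_k in A and b_p < b_q < b_r in σ_B such that a_i b_q ∈ E, a_j b_q ∉ E, a_j b_r ∈ E and a_k b_p ∈ E; (P2) indices with a_i < a_j < a_k in A and b_p < b_q in σ_B such that a_i b_p ∈ E, a_j b_p ∉ E, a_j b_q ∈ E and a_k b_p ∈ E; (P3) indices with a_i < a_j in A and b_p < b_q < b_r in σ_B such that a_i b_q ∈ E, a_j b_p ∈ E, a_j b_q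 ∉ E and a_j b_r ∈ E. -/
open Sum

/-! Necessity: each of P1, P2, P3 directly exhibits a forbidden quadruple `a' ≺ a ≺ b ≺ b'`.
Sufficiency: put every `b` immediately after the last `a` adjacent to some `q ≼ b`. The
resulting order is linear because these cuts grow along `σ_B`; and in a forbidden quadruple
for it, the witness `c ≥ a`, `q ≼ b` of `a ≺ b` yields P2 if `q = b`, P3 if `c = a`, and P1
otherwise. -/

section CutOrder

variable {α β : Type*}

def cutOrder [Preorder α] (s : β → β → Prop) (D : β → LowerSet α) : α ⊕ β → α ⊕ β → Prop
  | inl a, inl a' => a < a'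
  | inl a, inr b => a ∈ D b
  | inr b, inl a => a ∉ D b
  | inr b, inr b' => s b b'

theorem isStrictTotalOrder_cutOrder [LinearOrder α] {s : β → β → Prop} {D : β → LowerSet α}
    (hs : IsStrictTotalOrder β s) (hD : ∀ b b', s b b' → D b ≤ D b') :
    IsStrictTotalOrder (α ⊕ β) (cutOrder s D) where
  trichotomous
    | inl a, inl a', h, h' => congrArg inl (le_antisymm (not_lt.1 h') (not_lt.1 h))
    | inl a, inr b, h, h' => absurd (not_not.1 h') h
    | inr b, inl a, h, h' => absurd (not_not.1 h) h'
    | inr b, inr b', h, h' => congrArg inr (hs.trichotomous b b' h h')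
  irrefl
    | inl a => lt_irrefl a
    | inr b => hs.irrefl b
  trans := by
    rintro (a | b) (a' | b') (a'' | b'') h h' <;> simp only [cutOrder] at h h' ⊢
    · exact h.trans h'
    · exact (D b'').lower h.le h'
    · exact lt_of_not_ge fun h'' => h' ((D b').lower h'' h)
    · exact hD b' b'' h' h
    · exact fun h'' => h ((D b).lower h'.le h'')
    · rcases trichotomous_of s b b'' with hbb | rfl | hbb
      · exact hbb
      · exact absurd h' h
      · exact absurd (hD b'' b hbb h') h
    · exact fun h'' => h' (hD b b' h h'')
    · exact hs.trans _ _ _ h h'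

end CutOrder

section Patterns

variable {α β : Type*} [LT α] (E : α → β → Prop) (s : β → β → Prop)

def HasP1 : Prop :=
  ∃ (i j l : α) (p q t : β), i < j ∧ j < l ∧ s p q ∧ s q t ∧
    E i q ∧ ¬ E j q ∧ E j t ∧ E l p

def HasP2 : Prop :=
  ∃ (i j l : α) (p q : β), i < j ∧ j < l ∧ s p q ∧
    E i p ∧ ¬ E j p ∧ E j q ∧ E l p

def HasP3 : Prop :=
  ∃ (i j : α) (p q t : β), i < j ∧ s p q ∧ s q t ∧
    E i q ∧ E j p ∧ ¬ E j q ∧ E j t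

end Patterns

section Stick

variable {n : ℕ} {β : Type} {E : Fin n → β → Prop} {s : β → β → Prop}

def neighborCut (E : Fin n → β → Prop) (s : β → β → Prop) (b : β) : LowerSet (Fin n) :=
  lowerClosure {c | ∃ q, (s q b ∨ q = b) ∧ E c q}

theorem neighborCut_mono (hs : IsTrans β s) {b b' : β} (h : s b b') :
    neighborCut E s b ≤ neighborCut E s b' := by
  refine lowerClosure_mono fun c ⟨q, hq, hc⟩ => ⟨q, Or.inl ?_, hc⟩
  rcases hq with hq | rfl
  · exact hs.trans _ _ _ hq h
  · exact h

theorem isStickOrder_cutOrder_neighborCut (hs : IsStrictTotalOrder β s)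
    (h1 : ¬ HasP1 E s) (h2 : ¬ HasP2 E s) (h3 : ¬ HasP3 E s) :
    IsStickOrder n β E (cutOrder s (neighborCut E s)) := by
  refine ⟨isStrictTotalOrder_cutOrder hs fun _ _ => neighborCut_mono hs.toIsTrans,
    fun a b hab => subset_lowerClosure ⟨b, Or.inr rfl, hab⟩, ?_⟩
  rintro ⟨a, a', b, b', ha'a, hab, hbb', ha'b, hab', hnab⟩
  obtain ⟨c, ⟨q, hqb | rfl, hcq⟩, hac⟩ := mem_lowerClosure.1 hab
  · rcases hac.eq_or_lt with rfl | hac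
    · exact h3 ⟨a', a, q, b, b', ha'a, hqb, hbb', ha'b, hcq, hnab, hab'⟩
    · exact h1 ⟨a', a, c, q, b, b', ha'a, hac, hqb, hbb', ha'b, hnab, hab', hcq⟩
  · have hac : a < c := hac.lt_of_ne fun hac => hnab (hac ▸ hcq)
    exact h2 ⟨a', a, c, q, b', ha'a, hac, hbb', ha'b, hnab, hab', hcq⟩

theorem not_hasPatterns_of_isStickOrder {r : Fin n ⊕ β → Fin n ⊕ β → Prop}
    (hr : IsStickOrder n β E r) (hA : ∀ i j : Fin n, r (inl i) (inl j) ↔ i < j)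
    (hB : ∀ p q : β, r (inr p) (inr q) ↔ s p q) :
    ¬ HasP1 E s ∧ ¬ HasP2 E s ∧ ¬ HasP3 E s := by
  obtain ⟨hlin, hedge, hforb⟩ := hr
  refine ⟨?_, ?_, ?_⟩
  · rintro ⟨i, j, l, p, q, t, hij, hjl, hpq, hqt, hiq, hjq, hjt, hlp⟩
    exact hforb ⟨j, i, q, t, (hA i j).2 hij,
      hlin.trans _ _ _ ((hA j l).2 hjl) (hlin.trans _ _ _ (hedge l p hlp) ((hB p q).2 hpq)),
      (hB q t).2 hqt, hiq, hjt, hjq⟩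
  · rintro ⟨i, j, l, p, q, hij, hjl, hpq, hip, hjp, hjq, hlp⟩
    exact hforb ⟨j, i, p, q, (hA i j).2 hij, hlin.trans _ _ _ ((hA j l).2 hjl) (hedge l p hlp),
      (hB p q).2 hpq, hip, hjq, hjp⟩
  · rintro ⟨i, j, p, q, t, hij, hpq, hqt, hiq, hjp, hjq, hjt⟩
    exact hforb ⟨j, i, q, t, (hA i j).2 hij, hlin.trans _ _ _ (hedge j p hjp) ((hB p q).2 hpq),
      (hB q t).2 hqt, hiq, hjt, hjq⟩

end Stick

theorem stmt10_general (n : ℕ) (β : Type) (E : Fin n → β → Prop)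
    (sB : β → β → Prop) (hsB : IsStrictTotalOrder β sB) :
    (∃ r, IsStickOrder n β E r ∧ (∀ i j : Fin n, r (inl i) (inl j) ↔ i < j) ∧
        (∀ p q : β, r (inr p) (inr q) ↔ sB p q)) ↔
      (¬ ∃ (i j l : Fin n) (p q s : β), i < j ∧ j < l ∧ sB p q ∧ sB q s ∧
          E i q ∧ ¬ E j q ∧ E j s ∧ E l p) ∧
      (¬ ∃ (i j l : Fin n) (p q : β), i < j ∧ j < l ∧ sB p q ∧
          E i p ∧ ¬ E j p ∧ E j q ∧ E l p) ∧
      (¬ ∃ (i j : Fin n) (p q s : β), i < j ∧ sB p q ∧ sB q s ∧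
          E i q ∧ E j p ∧ ¬ E j q ∧ E j s) := by
  refine ⟨fun ⟨r, hr, hA, hB⟩ => not_hasPatterns_of_isStickOrder hr hA hB, ?_⟩
  rintro ⟨h1, h2, h3⟩
  exact ⟨cutOrder sB (neighborCut E sB), isStickOrder_cutOrder_neighborCut hsB h1 h2 h3,
    fun _ _ => Iff.rfl, fun _ _ => Iff.rfl⟩

/-- Given a linear order `σ_B` on `B`, `G` admits a Stick order with the
given restriction to `A` and restriction `σ_B` to `B` iff none of the ordered
configurations `P1`, `P2`, `P3` occurs. -/
theorem stmt10 (n : ℕ) (β : Type) [Fintype β] (E : Fin n → β → Prop)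
    (hE : ∀ b : β, ∃ a : Fin n, E a b)
    (sB : β → β → Prop) (hsB : IsStrictTotalOrder β sB) :
    (∃ r, IsStickOrder n β E r ∧ (∀ i j : Fin n, r (inl i) (inl j) ↔ i < j) ∧
        (∀ p q : β, r (inr p) (inr q) ↔ sB p q)) ↔
      (¬ ∃ (i j l : Fin n) (p q s : β), i < j ∧ j < l ∧ sB p q ∧ sB q s ∧
          E i q ∧ ¬ E j q ∧ E j s ∧ E l p) ∧
      (¬ ∃ (i j l : Fin n) (p q : β), i < j ∧ j < l ∧ sB p q ∧
          E i p ∧ ¬ E j p ∧ E j q ∧ E l p) ∧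
      (¬ ∃ (i j : Fin n) (p q s : β), i < j ∧ sB p q ∧ sB q s ∧
          E i q ∧ E j p ∧ ¬ E j q ∧ E j s) :=
  stmt10_general n β E sB hsB
end

section
/- Let G be an A-Stick N-overlap graph and ≺^c a canonical order for G. If b_t ≺^c b_s for b_t, b_s ∈ B, then b_t ≺° b_s or 1_t < 1_s. -/
open Sum

/-- A canonical order for `G` (with `m j = max {i | a_i ≺° b_j}` given as a parameter):
a linear (strict total) order on `A ∪ B` extending `≺°` in which every `b_j` is
left-optimal, i.e. `a_{m_j} ≺ b_j` and `b_j ≺ a_{m_j + 1}` whenever `m_j < n`. -/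
def IsCanonicalOrder (n : ℕ) (β : Type) (E : Fin n → β → Prop) (k : β → Fin n)
    (m : β → Fin n) (r : (Fin n ⊕ β) → (Fin n ⊕ β) → Prop) : Prop :=
  IsStrictTotalOrder (Fin n ⊕ β) r ∧
  (∀ c d : Fin n ⊕ β, Prec n β E k c d → r c d) ∧
  ∀ j : β, r (inl (m j)) (inr j) ∧
    ∀ hlt : (m j : ℕ) + 1 < n, r (inr j) (inl ⟨(m j : ℕ) + 1, hlt⟩)
/-- `G` is an N-overlap graph: for all distinct `b_s, b_t ∈ B`, neither `N(b_s) ⊆ N(b_t)`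
nor `N(b_t) ⊆ N(b_s)`. -/
def NOverlap (n : ℕ) (β : Type) (E : Fin n → β → Prop) : Prop :=
  ∀ s t : β, s ≠ t → ¬ ∀ a : Fin n, E a s → E a t

/-!
Suppose `b_t ≺^c b_s`, but `b_t ⊀° b_s` and `1_s ≤ 1_t`. Left-optimality gives
`k_t ≤ m_t ≤ m_s`. A neighbour of `b_t` outside `N(b_s)` (N-overlap) lies beyond `k_s`, since
otherwise (TB) gives `b_t ≺° b_s`; so `k_s < k_t ≤ m_s`, and the chain witnessing `a_{m_s} ≺° b_s`
passes through some `b_w ≺° b_s` with `m_s ≤ k_w`.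

Any `b_x ≼° b_s` with `1_x ≤ k_t ≤ k_x` yields `b_t ≺° b_s`: by (FB) if `a_{k_t} b_x ∈ E`, by (TB)
otherwise. So `1_x ≤ k_t` propagates from `b_s` down every `≺°`-chain ending in `b_s`: a (TB) or
(FB) step to some `b_h` with `1_h > k_t` would put `k_t` in the span `[1_x, k_x]` of its target
resp. of its `b_w`. In particular `1_w ≤ k_t ≤ k_w`, the final contradiction.
-/

theorem Relation.ReflGen.head_of_trans {α : Type*} {r : α → α → Prop} {a b c : α}
    (hbc : ReflGen r b c) (htrans : ∀ {x y z}, r x y → r y z → r x z) (hab : r a b) :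
    ReflGen r a c := by
  rcases hbc with _ | hbc
  exacts [.single hab, .single (htrans hab hbc)]

section Prec

variable {n : ℕ} {β : Type} {E : Fin n → β → Prop} {k : β → Fin n}

local notation:50 c:51 " ≺° " d:51 => Prec n β E k c d

theorem Prec.exists_eq_inl_of_inl {c : Fin n ⊕ β} {x : Fin n} (h : c ≺° inl x) :
    ∃ i, c = inl i ∧ i < x := by
  generalize hd : (inl x : Fin n ⊕ β) = d at h
  induction h generalizing x with
  | O hij => cases hd; exact ⟨_, rfl, hij⟩
  | A | TB | FB => cases hd
  | T _ _ ih₁ ih₂ =>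
    obtain ⟨y, rfl, hyx⟩ := ih₂ hd
    obtain ⟨i, rfl, hiy⟩ := ih₁ rfl
    exact ⟨i, rfl, hiy.trans hyx⟩

theorem Prec.le_k_or_exists_of_inl (hk : ∀ j i, E i j → i ≤ k j) {i : Fin n} {j : β}
    (h : inl i ≺° inr j) : i ≤ k j ∨ ∃ w, inr w ≺° inr j ∧ i ≤ k w := by
  generalize hc : (inl i : Fin n ⊕ β) = c at h
  generalize hd : (inr j : Fin n ⊕ β) = d at h
  induction h generalizing i j with
  | O => cases hd
  | A hE => cases hc; cases hd; exact Or.inl (hk _ _ hE)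
  | TB | FB => cases hc
  | @T c q d hcq hqd ih₁ ih₂ =>
    subst hc hd
    cases q with
    | inl x =>
      obtain ⟨_, hi, hix⟩ := hcq.exists_eq_inl_of_inl
      cases hi
      exact (ih₂ rfl rfl).imp (hix.le.trans ·) fun ⟨w, hw, hxw⟩ => ⟨w, hw, hix.le.trans hxw⟩
    | inr w₀ =>
      refine (ih₁ rfl rfl).elim (fun hiw => Or.inr ⟨w₀, hqd, hiw⟩) ?_
      exact fun ⟨w, hw, hiw⟩ => Or.inr ⟨w, hw.T hqd, hiw⟩

variable {one : β → Fin n}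

theorem prec_of_reflGen_of_k_mem_Icc (hk : ∀ j, E (k j) j) (hone : ∀ j, E (one j) j)
    {s t x : β} (hst : k s < k t)
    (hx : Relation.ReflGen (Prec n β E k) (inr x) (inr s)) (hkt : k t ∈ Set.Icc (one x) (k x)) :
    inr t ≺° inr s := by
  rcases hx with _ | hx
  · exact absurd hkt.2 hst.not_ge
  by_cases hE : E (k t) x
  · exact .FB hx hst hE (hk t)
  · have hone_lt : one x < k t := hkt.1.lt_of_ne fun h => hE (h ▸ hone x)
    have hlt_k : k t < k x := hkt.2.lt_of_ne fun h => hE (h ▸ hk x)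
    exact (Prec.TB hone_lt hlt_k (hone x) hE (hk t)).T hx

theorem one_le_k_of_prec (hk : ∀ j, IsGreatest {i | E i j} (k j))
    (hone : ∀ j, IsLeast {i | E i j} (one j)) {s t : β} (hst : k s < k t)
    (hts : ¬ inr t ≺° inr s) {w j : β} (h : inr w ≺° inr j)
    (hj : Relation.ReflGen (Prec n β E k) (inr j) (inr s)) (hone_j : one j ≤ k t) :
    one w ≤ k t := by
  generalize hc : (inr w : Fin n ⊕ β) = c at h
  generalize hd : (inr j : Fin n ⊕ β) = d at h
  induction h generalizing w j with
  | O | A => cases hc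
  | @TB _ _ w j _ hlt_k _ _ hE =>
    cases Sum.inr_injective hc; cases Sum.inr_injective hd
    by_contra! hlt
    have hkt : k t ∈ Set.Icc (one j) (k j) :=
      ⟨hone_j, (hlt.trans_le ((hone w).2 hE)).le.trans hlt_k.le⟩
    exact hts (prec_of_reflGen_of_k_mem_Icc (hk · |>.1) (hone · |>.1) hst hj hkt)
  | @FB _ w₁ w j hw₁ _ hE_w₁ hE ih =>
    cases Sum.inr_injective hc; cases Sum.inr_injective hd
    by_contra! hlt
    have hkt : k t ∈ Set.Icc (one w₁) (k w₁) :=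
      ⟨ih hj hone_j rfl rfl, (hlt.trans_le ((hone w).2 hE)).le.trans ((hk _).2 hE_w₁)⟩
    exact hts <| prec_of_reflGen_of_k_mem_Icc (hk · |>.1) (hone · |>.1) hst
      (hj.head_of_trans Prec.T hw₁) hkt
  | @T c q d hcq hqd ih₁ ih₂ =>
    subst hc hd
    cases q with
    | inl x =>
      obtain ⟨_, h, _⟩ := hcq.exists_eq_inl_of_inl
      cases h
    | inr w₀ => exact ih₁ (hj.head_of_trans Prec.T hqd) (ih₂ hj hone_j rfl rfl) rfl rfl

theorem k_lt_of_not_prec (hone : ∀ j, IsLeast {i | E i j} (one j)) {s t : β} (hks : E (k s) s)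
    (hts : ¬ inr t ≺° inr s) (hle : one s ≤ one t) {u : Fin n} (hut : E u t) (hus : ¬ E u s) :
    k s < u := by
  have hone_lt : one s < u := (hle.trans ((hone t).2 hut)).lt_of_ne fun h => hus (h ▸ (hone s).1)
  rcases lt_trichotomy u (k s) with hlt | rfl | hgt
  exacts [absurd (.TB hone_lt hlt (hone s).1 hus hut) hts, absurd hks hus, hgt]

theorem IsCanonicalOrder.m_mono {m : β → Fin n} {rc : Fin n ⊕ β → Fin n ⊕ β → Prop}
    (hrc : IsCanonicalOrder n β E k m rc) {s t : β} (hts : rc (inr t) (inr s)) : m t ≤ m s := by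
  obtain ⟨_, hext, hopt⟩ := hrc
  by_contra! hlt
  have hnext : (m s : ℕ) + 1 < n := by omega
  have : rc (inl (m t)) (inl ⟨m s + 1, hnext⟩) :=
    _root_.trans (_root_.trans (hopt t).1 hts) ((hopt s).2 hnext)
  rcases (show (⟨m s + 1, hnext⟩ : Fin n) ≤ m t from hlt).eq_or_lt with heq | hlt'
  · exact irrefl _ (heq ▸ this)
  · exact irrefl _ (_root_.trans this (hext _ _ (.O hlt')))

end Prec

theorem stmt12_general (n : ℕ) (β : Type) (E : Fin n → β → Prop) (k : β → Fin n)
    (hk : ∀ j : β, E (k j) j ∧ ∀ i : Fin n, E i j → i ≤ k j)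
    (one : β → Fin n)
    (hone : ∀ j : β, E (one j) j ∧ ∀ i : Fin n, E i j → one j ≤ i)
    (m : β → Fin n)
    (hm : ∀ j : β, Prec n β E k (inl (m j)) (inr j) ∧
      ∀ i : Fin n, Prec n β E k (inl i) (inr j) → i ≤ m j)
    (hN : NOverlap n β E)
    (rc : (Fin n ⊕ β) → (Fin n ⊕ β) → Prop)
    (hrc : IsCanonicalOrder n β E k m rc)
    (t s : β) (hts : rc (inr t) (inr s)) :
    Prec n β E k (inr t) (inr s) ∨ one t < one s := by
  have hk' : ∀ j, IsGreatest {i | E i j} (k j) := hk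
  have hone' : ∀ j, IsLeast {i | E i j} (one j) := hone
  by_contra! ⟨hnot, hle⟩
  have hne : t ≠ s := by
    rintro rfl
    exact hrc.1.irrefl _ hts
  obtain ⟨u, hut, hus⟩ : ∃ u, E u t ∧ ¬ E u s := by simpa using hN t s hne
  have hst : k s < k t :=
    (k_lt_of_not_prec hone' (hk s).1 hnot hle hut hus).trans_le ((hk t).2 u hut)
  have hkt_ms : k t ≤ m s := ((hm t).2 _ (.A (hk t).1)).trans (hrc.m_mono hts)
  obtain ⟨w, hws, hms_kw⟩ := ((hm s).1.le_k_or_exists_of_inl fun j => (hk j).2).resolve_left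
    (hst.trans_le hkt_ms).not_ge
  have hone_s : one s ≤ k t := ((hone s).2 _ (hk s).1).trans hst.le
  have hone_w : one w ≤ k t := one_le_k_of_prec hk' hone' hst hnot hws .refl hone_s
  exact hnot <| prec_of_reflGen_of_k_mem_Icc (hk · |>.1) (hone · |>.1) hst (.single hws)
    ⟨hone_w, hkt_ms.trans hms_kw⟩

/-- Let `G` be an A-Stick N-overlap graph and `≺^c` a canonical order for
`G`. If `b_t ≺^c b_s` then `b_t ≺° b_s` or `1_t < 1_s`. -/
theorem stmt12 (n : ℕ) (β : Type) [Fintype β] (E : Fin n → β → Prop) (k : β → Fin n)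
    (hk : ∀ j : β, E (k j) j ∧ ∀ i : Fin n, E i j → i ≤ k j)
    (one : β → Fin n)
    (hone : ∀ j : β, E (one j) j ∧ ∀ i : Fin n, E i j → one j ≤ i)
    (m : β → Fin n)
    (hm : ∀ j : β, Prec n β E k (inl (m j)) (inr j) ∧
      ∀ i : Fin n, Prec n β E k (inl i) (inr j) → i ≤ m j)
    (hA : ∃ r, IsAStickOrder n β E r)
    (hN : NOverlap n β E)
    (rc : (Fin n ⊕ β) → (Fin n ⊕ β) → Prop)
    (hrc : IsCanonicalOrder n β E k m rc)
    (t s : β) (hts : rc (inr t) (inr s)) :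
    Prec n β E k (inr t) (inr s) ∨ one t < one s :=
  stmt12_general n β E k hk one hone m hm hN rc hrc t s hts
end

section
/- Let G be an A-Stick N-overlap graph with no isolated vertices, ≺ an A-Stick order of G, and b_t ≺ b_s two vertices of B that are consecutive among B with respect to ≺. Then the swap of b_t and b_s is good if and only if 1_s ≤ 1_t and b_t ≺° b_s does not hold. -/
open Sum

/-- The rank of a vertex in an order `r`: the number of vertices strictly preceding it
(positions in the steady representation). -/
noncomputable def rankOf (n : ℕ) (β : Type) (r : (Fin n ⊕ β) → (Fin n ⊕ β) → Prop)
    (v : Fin n ⊕ β) : ℕ :=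
  Set.ncard {w : Fin n ⊕ β | r w v}

open Classical in
/-- The total segment length of the steady Stick representation with origin order `r`, all
segments as short as possible: the segment of `b ∈ B` has length `rank b - rank a_{1_b}`,
and the segment of `a ∈ A` has length `rank b* - rank a` where `b*` is the `r`-largest
neighbor of `a` (its rank is the sup of the ranks of the neighbors of `a`). -/
noncomputable def lengthOf (n : ℕ) (β : Type) [Fintype β] (E : Fin n → β → Prop)
    (one : β → Fin n) (r : (Fin n ⊕ β) → (Fin n ⊕ β) → Prop) : ℕ :=
  (∑ b : β, (rankOf n β r (inr b) - rankOf n β r (inl (one b)))) +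
  ∑ a : Fin n,
    ((Finset.univ.filter (fun b : β => E a b)).sup (fun b => rankOf n β r (inr b))
      - rankOf n β r (inl a))
/-- The order obtained from `r` by moving `b_s` immediately before `a_v`, keeping all other
relative positions unchanged. -/
def moveBefore (n : ℕ) (β : Type) (r : (Fin n ⊕ β) → (Fin n ⊕ β) → Prop)
    (s : β) (v : Fin n) : (Fin n ⊕ β) → (Fin n ⊕ β) → Prop :=
  fun x y =>
    (x = inr s ∧ y ≠ inr s ∧ (y = inl v ∨ r (inl v) y)) ∨
    (x ≠ inr s ∧ y = inr s ∧ r x (inl v)) ∨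
    (x ≠ inr s ∧ y ≠ inr s ∧ r x y)

/-- An alternate chain (for the pair with right element `b_s`, starting at `a_c`):
a maximal sequence `a_{x_1} = a_c, b_{y_1}, a_{x_2}, …, a_{x_l}, b_{y_l}, a_{x_{l+1}}` with
`a_{x_g} b_{y_g} ∈ E`, `a_{x_{g+1}} b_{y_g} ∈ E`, `x_{g+1} < x_g` for `1 ≤ g ≤ l`, and
`a_{x_g} b_s ∉ E` for `1 ≤ g ≤ l + 1`. -/
def IsAltChain (n : ℕ) (β : Type) (E : Fin n → β → Prop) (s : β) (c : Fin n)
    (l : ℕ) (x : ℕ → Fin n) (y : ℕ → β) : Prop :=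
  x 1 = c ∧
  (∀ g : ℕ, 1 ≤ g → g ≤ l → E (x g) (y g) ∧ E (x (g + 1)) (y g) ∧ x (g + 1) < x g) ∧
  (∀ g : ℕ, 1 ≤ g → g ≤ l + 1 → ¬ E (x g) s) ∧
  ¬ ∃ (b : β) (a : Fin n), E (x (l + 1)) b ∧ E a b ∧ a < x (l + 1) ∧ ¬ E a s

/-- `a_v` is the limit `v_st` of `b_s` and `b_t`: with `c = min {i | a_i b_t ∈ E, a_i b_s ∉ E}`,
`v` is the minimum over all alternate chains of the index of the last chain element. -/
def IsLimit (n : ℕ) (β : Type) (E : Fin n → β → Prop) (t s : β) (v : Fin n) : Prop :=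
  ∃ c : Fin n, (E c t ∧ ¬ E c s ∧ ∀ i : Fin n, E i t → ¬ E i s → c ≤ i) ∧
    (∃ (l : ℕ) (x : ℕ → Fin n) (y : ℕ → β), IsAltChain n β E s c l x y ∧ x (l + 1) = v) ∧
    (∀ (l : ℕ) (x : ℕ → Fin n) (y : ℕ → β), IsAltChain n β E s c l x y → v ≤ x (l + 1))

/-- The swap of `b_t` and `b_s` (in the order `r`) is good: moving `b_s` immediately before
the limit `a_{v_st}` yields again an A-Stick order whose steady shortest representation has
strictly smaller total segment length. -/
def GoodSwap (n : ℕ) (β : Type) [Fintype β] (E : Fin n → β → Prop) (one : β → Fin n)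
    (r : (Fin n ⊕ β) → (Fin n ⊕ β) → Prop) (t s : β) : Prop :=
  ∃ v : Fin n, IsLimit n β E t s v ∧
    IsAStickOrder n β E (moveBefore n β r s v) ∧
    lengthOf n β E one (moveBefore n β r s v) < lengthOf n β E one r

/-!
(⇒) In the moved order `b_s` precedes `a_v`, and `a_v ≤ a_c` with `a_c b_t ∈ E`. Every rule of
`≺°` is forced in every A-Stick order, so `b_t ≺° b_s` would close a cycle `b_t, b_s, a_v, b_t`;
and `1_t < 1_s` would give `c ≤ 1_t < 1_s`, closing the cycle `a_{1_s}, b_s, a_v, a_{1_s}`.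

(⇐) Rule (TB) at `b_s` and rule (FB) propagated backwards along an alternate chain show that no
chain vertex falls to `a_{k_s}` or below, so all neighbours of `b_s` precede `a_v`. Minimality of
the limit and the Stick condition along the chain show that a `b` strictly between `a_v` and `b_s`
has all its neighbours below `a_v` in `N(b_s)`. These two facts make the moved order an A-Stick
order. In it no segment of a vertex of `A` grows, the segment of each `b` between `a_v` and `b_s`
grows by one, and the segment of `b_s` shrinks by more than the number of such `b`.
-/

def InIco {α : Type*} (r : α → α → Prop) (u w z : α) : Prop :=
  (z = u ∨ r u z) ∧ r z w

section MoveBefore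

variable {n : ℕ} {β : Type} {r : (Fin n ⊕ β) → (Fin n ⊕ β) → Prop} {s : β} {v : Fin n}
  {x y : Fin n ⊕ β}

theorem moveBefore_iff_of_ne (hx : x ≠ inr s) (hy : y ≠ inr s) :
    moveBefore n β r s v x y ↔ r x y := by
  simp [moveBefore, hx, hy]

theorem moveBefore_self_left :
    moveBefore n β r s v (inr s) y ↔ y ≠ inr s ∧ (y = inl v ∨ r (inl v) y) := by
  simp [moveBefore]

theorem moveBefore_self_right :
    moveBefore n β r s v x (inr s) ↔ x ≠ inr s ∧ r x (inl v) := by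
  simp [moveBefore]

variable [IsStrictTotalOrder (Fin n ⊕ β) r]

theorem isStrictTotalOrder_moveBefore :
    IsStrictTotalOrder (Fin n ⊕ β) (moveBefore n β r s v) where
  trichotomous x y := by
    suffices moveBefore n β r s v x y ∨ x = y ∨ moveBefore n β r s v y x by tauto
    rcases eq_or_ne x (inr s) with rfl | hx <;> rcases eq_or_ne y (inr s) with rfl | hy
    · simp
    · simp only [moveBefore_self_left, moveBefore_self_right]
      rcases trichotomous_of r y (inl v) with h | h | h <;> simp_all
    · simp only [moveBefore_self_left, moveBefore_self_right]
      rcases trichotomous_of r x (inl v) with h | h | h <;> simp_all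
    · simp only [moveBefore_iff_of_ne hx hy, moveBefore_iff_of_ne hy hx]
      exact trichotomous_of r x y
  irrefl x := by
    rcases eq_or_ne x (inr s) with rfl | hx
    · simp [moveBefore_self_left]
    · simpa [moveBefore_iff_of_ne hx hx] using irrefl_of r x
  trans x y z hxy hyz := by
    rcases eq_or_ne x (inr s) with rfl | hx <;> rcases eq_or_ne y (inr s) with rfl | hy <;>
      rcases eq_or_ne z (inr s) with rfl | hz <;>
      simp_all [moveBefore_iff_of_ne, moveBefore_self_left, moveBefore_self_right]
    · rcases hxy with rfl | hvy
      exacts [irrefl_of r _ hyz, asymm_of r hvy hyz]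
    · rcases hxy with rfl | hvy
      exacts [Or.inr hyz, Or.inr (trans_of r hvy hyz)]
    · rcases hyz with rfl | hvz
      exacts [hxy, trans_of r hxy hvz]
    all_goals exact trans_of r hxy hyz

end MoveBefore

section Rank

variable {n : ℕ} {β : Type} {r : (Fin n ⊕ β) → (Fin n ⊕ β) → Prop}
  [IsStrictTotalOrder (Fin n ⊕ β) r] {s : β} {v : Fin n} {u w : Fin n ⊕ β}

theorem rankOf_lt_rankOf [Finite β] (h : r u w) : rankOf n β r u < rankOf n β r w :=
  Set.ncard_lt_ncard <|
    (Set.ssubset_iff_of_subset fun _ hz => trans_of r hz h).2 ⟨u, h, irrefl_of r u⟩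

theorem rankOf_add_ncard_inIco [Finite β] (h : r u w) :
    rankOf n β r u + {z | InIco r u w z}.ncard = rankOf n β r w := by
  have hdisj : Disjoint {z | r z u} {z | InIco r u w z} := by
    refine Set.disjoint_left.2 fun z hzu ⟨hz, _⟩ => ?_
    rcases hz with rfl | huz
    exacts [irrefl_of r _ hzu, asymm_of r hzu huz]
  unfold rankOf
  rw [← Set.ncard_union_eq hdisj]
  congr 1
  ext z
  simp only [Set.mem_ofPred_eq, Set.mem_union, InIco]
  constructor
  · rintro (hzu | ⟨-, hzw⟩)
    exacts [trans_of r hzu h, hzw]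
  · intro hzw
    rcases trichotomous_of r z u with hzu | rfl | huz
    exacts [Or.inl hzu, Or.inr ⟨Or.inl rfl, hzw⟩, Or.inr ⟨Or.inr huz, hzw⟩]

theorem rankOf_moveBefore_self (hvs : r (inl v) (inr s)) :
    rankOf n β (moveBefore n β r s v) (inr s) = rankOf n β r (inl v) := by
  unfold rankOf
  congr 1
  ext z
  simp only [Set.mem_ofPred_eq, moveBefore_self_right, and_iff_right_iff_imp]
  rintro hzv rfl
  exact asymm_of r hzv hvs

theorem rankOf_moveBefore_of_inIco [Finite β] (hw : InIco r (inl v) (inr s) w) :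
    rankOf n β (moveBefore n β r s v) w = rankOf n β r w + 1 := by
  have hws : w ≠ inr s := by rintro rfl; exact irrefl_of r _ hw.2
  have hset : {z | moveBefore n β r s v z w} = insert (inr s) {z | r z w} := by
    ext z
    rcases eq_or_ne z (inr s) with rfl | hz
    · simpa [moveBefore_self_left, hws] using hw.1
    · simp [moveBefore_iff_of_ne hz hws, hz]
  unfold rankOf
  rw [hset, Set.ncard_insert_of_notMem (show inr s ∉ {z | r z w} from asymm_of r hw.2)]

theorem rankOf_moveBefore_of_not_inIco (hvs : r (inl v) (inr s)) (hws : w ≠ inr s)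
    (hw : ¬ InIco r (inl v) (inr s) w) :
    rankOf n β (moveBefore n β r s v) w = rankOf n β r w := by
  unfold rankOf
  congr 1
  ext z
  rcases eq_or_ne z (inr s) with rfl | hz
  · simp only [InIco, not_and] at hw
    simp only [Set.mem_ofPred_eq, moveBefore_self_left, hws, ne_eq, not_false_eq_true, true_and]
    constructor
    · intro hvw
      rcases trichotomous_of r w (inr s) with h | h | h
      exacts [absurd h (hw hvw), absurd h hws, h]
    · exact fun hsw => Or.inr (trans_of r hvs hsw)
  · simp [moveBefore_iff_of_ne hz hws]

theorem rankOf_le_rankOf_moveBefore [Finite β] (hvs : r (inl v) (inr s)) (hws : w ≠ inr s) :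
    rankOf n β r w ≤ rankOf n β (moveBefore n β r s v) w := by
  by_cases hw : InIco r (inl v) (inr s) w
  · simp [rankOf_moveBefore_of_inIco hw]
  · simp [rankOf_moveBefore_of_not_inIco hvs hws hw]

theorem rankOf_moveBefore_le [Finite β] (hvs : r (inl v) (inr s)) (hws : w ≠ inr s) :
    rankOf n β (moveBefore n β r s v) w ≤ rankOf n β r w + 1 := by
  by_cases hw : InIco r (inl v) (inr s) w
  · simp [rankOf_moveBefore_of_inIco hw]
  · simp [rankOf_moveBefore_of_not_inIco hvs hws hw]

end Rank

section Length

variable {n : ℕ} {β : Type} [Fintype β] {E : Fin n → β → Prop}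
  {r : (Fin n ⊕ β) → (Fin n ⊕ β) → Prop} [IsStrictTotalOrder (Fin n ⊕ β) r]
  {one : β → Fin n} {s : β} {v : Fin n}

theorem sum_segment_moveBefore_lt (hvs : r (inl v) (inr s)) (hos : r (inl (one s)) (inl v)) :
    ∑ b : β, (rankOf n β (moveBefore n β r s v) (inr b)
        - rankOf n β (moveBefore n β r s v) (inl (one b))) <
      ∑ b : β, (rankOf n β r (inr b) - rankOf n β r (inl (one b))) := by
  classical
  -- Each `b ∈ D` moves one place to the right, while the segment of `b_s` loses at least
  -- `{a_v} ∪ D`.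
  set D := Finset.univ.filter fun b => InIco r (inl v) (inr s) (inr b)
  have hsD : s ∉ D := by simp [D, InIco, irrefl_of r (inr s)]
  have hD : ∑ b ∈ Finset.univ.erase s, (if b ∈ D then 1 else 0) = D.card := by
    rw [Finset.sum_erase _ (by simp [hsD])]
    simp
  have hbound : ∀ b ∈ Finset.univ.erase s,
      rankOf n β (moveBefore n β r s v) (inr b) - rankOf n β (moveBefore n β r s v) (inl (one b))
        ≤ rankOf n β r (inr b) - rankOf n β r (inl (one b)) + if b ∈ D then 1 else 0 := by
    intro b hb
    have hbs : (inr b : Fin n ⊕ β) ≠ inr s := by simpa using Finset.ne_of_mem_erase hb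
    have hone := rankOf_le_rankOf_moveBefore hvs (w := inl (one b)) (by simp)
    by_cases hbD : b ∈ D
    · rw [if_pos hbD, rankOf_moveBefore_of_inIco (by simpa [D] using hbD)]
      omega
    · rw [if_neg hbD, rankOf_moveBefore_of_not_inIco hvs hbs (by simpa [D] using hbD)]
      omega
  have hs : rankOf n β (moveBefore n β r s v) (inr s)
      - rankOf n β (moveBefore n β r s v) (inl (one s)) + D.card + 1
        ≤ rankOf n β r (inr s) - rankOf n β r (inl (one s)) := by
    have hIco : D.card + 1 ≤ {z | InIco r (inl v) (inr s) z}.ncard := by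
      have hsub : insert (inl v) (inr '' (D : Set β)) ⊆ {z | InIco r (inl v) (inr s) z} := by
        rintro z (rfl | ⟨b, hb, rfl⟩)
        · exact ⟨Or.inl rfl, hvs⟩
        · simpa [D] using hb
      calc D.card + 1 = (insert (inl v) (inr '' (D : Set β))).ncard := by
            rw [Set.ncard_insert_of_notMem (by simp),
              Set.ncard_image_of_injective _ inr_injective, Set.ncard_coe_finset]
        _ ≤ _ := Set.ncard_le_ncard hsub
    have hos' : ¬ InIco r (inl v) (inr s) (inl (one s)) := fun h =>
      h.1.elim (fun he => irrefl_of r _ (he ▸ hos)) (asymm_of r hos)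
    rw [rankOf_moveBefore_self hvs, rankOf_moveBefore_of_not_inIco hvs (by simp) hos',
      ← rankOf_add_ncard_inIco hvs]
    have := rankOf_lt_rankOf hos
    omega
  calc ∑ b : β, (rankOf n β (moveBefore n β r s v) (inr b)
          - rankOf n β (moveBefore n β r s v) (inl (one b))) + 1
      ≤ rankOf n β (moveBefore n β r s v) (inr s)
          - rankOf n β (moveBefore n β r s v) (inl (one s))
        + ∑ b ∈ Finset.univ.erase s,
          (rankOf n β r (inr b) - rankOf n β r (inl (one b)) + if b ∈ D then 1 else 0) + 1 := by
        rw [← Finset.add_sum_erase _ _ (Finset.mem_univ s)]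
        gcongr with b hb
        exact hbound b hb
    _ ≤ ∑ b : β, (rankOf n β r (inr b) - rankOf n β r (inl (one b))) := by
        rw [Finset.sum_add_distrib, hD, ← Finset.add_sum_erase _ _ (Finset.mem_univ s)]
        omega

open Classical in
theorem segment_moveBefore_le (hvs : r (inl v) (inr s))
    (hedge : ∀ a b, E a b → r (inl a) (inr b))
    (hEs : ∀ a, E a s → r (inl a) (inl v))
    (hbetween : ∀ a b, E a b → r (inl a) (inl v) → r (inl v) (inr b) → r (inr b) (inr s) →
      E a s)
    (a : Fin n) :
    (Finset.univ.filter (fun b => E a b)).sup (fun b => rankOf n β (moveBefore n β r s v) (inr b))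
        - rankOf n β (moveBefore n β r s v) (inl a) ≤
      (Finset.univ.filter (fun b => E a b)).sup (fun b => rankOf n β r (inr b))
        - rankOf n β r (inl a) := by
  have hle_sup : ∀ {b}, E a b → rankOf n β r (inr b) ≤
      (Finset.univ.filter (fun b => E a b)).sup (fun b => rankOf n β r (inr b)) := fun hab =>
    Finset.le_sup (f := fun b => rankOf n β r (inr b)) (by simpa using hab)
  by_cases ha : InIco r (inl v) (inr s) (inl a)
  · rw [rankOf_moveBefore_of_inIco ha]
    have hsup : (Finset.univ.filter (fun b => E a b)).sup
        (fun b => rankOf n β (moveBefore n β r s v) (inr b)) ≤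
        (Finset.univ.filter (fun b => E a b)).sup (fun b => rankOf n β r (inr b)) + 1 := by
      refine Finset.sup_le fun b hb => ?_
      have hab : E a b := by simpa using hb
      have hbs : (inr b : Fin n ⊕ β) ≠ inr s := by
        rintro ⟨⟩
        rcases ha.1 with h | h
        exacts [irrefl_of r _ (h ▸ hEs a hab), asymm_of r h (hEs a hab)]
      exact (rankOf_moveBefore_le hvs hbs).trans (by simpa using hle_sup hab)
    omega
  · rw [rankOf_moveBefore_of_not_inIco hvs (by simp) ha]
    refine Nat.sub_le_sub_right (Finset.sup_le fun b hb => ?_) _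
    have hab : E a b := by simpa using hb
    rcases eq_or_ne b s with rfl | hbs
    · rw [rankOf_moveBefore_self hvs]
      exact (rankOf_lt_rankOf hvs).le.trans (hle_sup hab)
    by_cases hb : InIco r (inl v) (inr s) (inr b)
    · have hvb : r (inl v) (inr b) := hb.1.resolve_left (by simp)
      have hav : r (inl a) (inl v) := by
        rcases trichotomous_of r (inl a) (inl v) with h | h | h
        exacts [h, absurd ⟨Or.inl h, trans_of r (hedge a b hab) hb.2⟩ ha,
          absurd ⟨Or.inr h, trans_of r (hedge a b hab) hb.2⟩ ha]
      rw [rankOf_moveBefore_of_inIco hb]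
      exact (rankOf_lt_rankOf hb.2).trans_le (hle_sup (hbetween a b hab hav hvb hb.2))
    · rw [rankOf_moveBefore_of_not_inIco hvs (by simpa using hbs) hb]
      exact hle_sup hab

theorem lengthOf_moveBefore_lt (hvs : r (inl v) (inr s)) (hos : r (inl (one s)) (inl v))
    (hedge : ∀ a b, E a b → r (inl a) (inr b))
    (hEs : ∀ a, E a s → r (inl a) (inl v))
    (hbetween : ∀ a b, E a b → r (inl a) (inl v) → r (inl v) (inr b) → r (inr b) (inr s) →
      E a s) :
    lengthOf n β E one (moveBefore n β r s v) < lengthOf n β E one r := by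
  have hB := sum_segment_moveBefore_lt hvs hos
  have hA := Finset.sum_le_sum fun a (_ : a ∈ Finset.univ) =>
    segment_moveBefore_le hvs hedge hEs hbetween a
  unfold lengthOf
  omega

end Length

namespace IsAStickOrder

variable {n : ℕ} {β : Type} {E : Fin n → β → Prop} {r : (Fin n ⊕ β) → (Fin n ⊕ β) → Prop}

theorem adj_of_lt (hr : IsAStickOrder n β E r) {a a' : Fin n} {b b' : β} (ha : a' < a)
    (hab : r (inl a) (inr b)) (hbb : r (inr b) (inr b')) (h' : E a' b) (hb' : E a b') :
    E a b :=
  by_contra fun h => hr.1.2.2 ⟨a, a', b, b', (hr.2 a' a).2 ha, hab, hbb, h', hb', h⟩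

theorem rel_inr_of_le (hr : IsAStickOrder n β E r) {a a' : Fin n} {b : β}
    (hb : E a' b) (h : a ≤ a') : r (inl a) (inr b) := by
  rcases h.lt_or_eq with h | rfl
  · exact hr.1.1.trans _ _ _ ((hr.2 a a').2 h) (hr.1.2.1 a' b hb)
  · exact hr.1.2.1 a b hb

theorem moveBefore {s : β} {v : Fin n} (hr : IsAStickOrder n β E r)
    (hvs : r (inl v) (inr s)) (hEs : ∀ a, E a s → r (inl a) (inl v))
    (hbetween : ∀ a b, E a b → r (inl a) (inl v) → r (inl v) (inr b) → r (inr b) (inr s) →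
      E a s) :
    IsAStickOrder n β E (moveBefore n β r s v) := by
  obtain ⟨⟨hsto, hedge, hforb⟩, hA⟩ := hr
  have hinl : ∀ a : Fin n, (inl a : Fin n ⊕ β) ≠ inr s := by simp
  refine ⟨⟨isStrictTotalOrder_moveBefore, fun a b hab => ?_, ?_⟩, fun i j => ?_⟩
  · rcases eq_or_ne b s with rfl | hbs
    · exact moveBefore_self_right.2 ⟨hinl a, hEs a hab⟩
    · exact (moveBefore_iff_of_ne (hinl a) (by simpa using hbs)).2 (hedge a b hab)
  · rintro ⟨a, a', b, b', h₁, h₂, h₃, e₁, e₂, e₃⟩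
    rw [moveBefore_iff_of_ne (hinl a') (hinl a)] at h₁
    rcases eq_or_ne b s with rfl | hbs
    · obtain ⟨-, hav⟩ := moveBefore_self_right.1 h₂
      obtain ⟨hb's, hvb'⟩ := moveBefore_self_left.1 h₃
      have hvb' : r (inl v) (inr b') := hvb'.resolve_left (by simp)
      rcases trichotomous_of r (inr b') (inr b) with h | h | h
      · exact e₃ (hbetween a b' e₂ hav hvb' h)
      · exact hb's h
      · exact hforb ⟨a, a', b, b', h₁, trans_of r hav hvs, h, e₁, e₂, e₃⟩
    have hbs : (inr b : Fin n ⊕ β) ≠ inr s := by simpa using hbs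
    rw [moveBefore_iff_of_ne (hinl a) hbs] at h₂
    rcases eq_or_ne b' s with rfl | hb's
    · exact hforb ⟨a, a', b, b', h₁, h₂, trans_of r (moveBefore_self_right.1 h₃).2 hvs, e₁, e₂, e₃⟩
    · rw [moveBefore_iff_of_ne hbs (by simpa using hb's)] at h₃
      exact hforb ⟨a, a', b, b', h₁, h₂, h₃, e₁, e₂, e₃⟩
  · rw [moveBefore_iff_of_ne (hinl i) (hinl j), hA]

end IsAStickOrder

theorem Prec.sound {n : ℕ} {β : Type} {E : Fin n → β → Prop} {k : β → Fin n}
    {r : (Fin n ⊕ β) → (Fin n ⊕ β) → Prop}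
    (hk : ∀ j : β, E (k j) j ∧ ∀ i : Fin n, E i j → i ≤ k j) (hr : IsAStickOrder n β E r)
    {p q : Fin n ⊕ β} (h : Prec n β E k p q) : r p q := by
  have := hr.1.1
  have hedge := hr.1.2.1
  induction h with
  | O h => exact (hr.2 _ _).2 h
  | A h => exact hedge _ _ h
  | @TB a a' h j haa' ha'k haj ha'j ha'h =>
    rcases trichotomous_of r (inr h) (inr j) with hhj | hhj | hjh
    · exact hhj
    · exact absurd (inr_injective hhj ▸ ha'h) ha'j
    · exact absurd (hr.adj_of_lt haa' (hr.rel_inr_of_le (hk j).1 ha'k.le) hjh haj ha'h) ha'j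
  | @FB a w h j _ hka haw hah ih =>
    have haj : ¬ E a j := fun haj => absurd ((hk j).2 a haj) (not_le.2 hka)
    rcases trichotomous_of r (inr h) (inr j) with hhj | hhj | hjh
    · exact hhj
    · exact absurd (inr_injective hhj ▸ hah) haj
    · exact absurd (hr.adj_of_lt hka (trans_of r (hedge a w haw) ih) hjh (hk j).1 hah) haj
  | T _ _ ih₁ ih₂ => exact trans_of r ih₁ ih₂

def IsAltWalk {n : ℕ} {β : Type} (E : Fin n → β → Prop) (s : β) (l : ℕ) (x : ℕ → Fin n)
    (y : ℕ → β) : Prop :=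
  (∀ g : ℕ, 1 ≤ g → g ≤ l → E (x g) (y g) ∧ E (x (g + 1)) (y g) ∧ x (g + 1) < x g) ∧
  (∀ g : ℕ, 1 ≤ g → g ≤ l + 1 → ¬ E (x g) s)

section AltChain

variable {n : ℕ} {β : Type} {E : Fin n → β → Prop} {s : β} {c : Fin n} {l : ℕ}
  {x : ℕ → Fin n} {y : ℕ → β}

theorem IsAltChain.isAltWalk (h : IsAltChain n β E s c l x y) : IsAltWalk E s l x y :=
  ⟨h.2.1, h.2.2.1⟩

theorem IsAltWalk.antitone (hw : IsAltWalk E s l x y) {g g' : ℕ} (hg : 1 ≤ g) (hgg' : g ≤ g')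
    (hg' : g' ≤ l + 1) : x g' ≤ x g := by
  induction g', hgg' using Nat.le_induction with
  | base => exact le_rfl
  | succ m hgm ih => exact (hw.1 m (hg.trans hgm) (by omega)).2.2.le.trans (ih (by omega))

theorem IsAltChain.le_start (h : IsAltChain n β E s c l x y) : x (l + 1) ≤ c :=
  h.1 ▸ h.isAltWalk.antitone le_rfl (by omega) le_rfl

theorem IsAltWalk.snoc (hw : IsAltWalk E s l x y) {m : ℕ} (hm : m ≤ l) {a : Fin n} {b : β}
    (hb : E (x (m + 1)) b) (ha : E a b) (hlt : a < x (m + 1)) (has : ¬ E a s) :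
    IsAltWalk E s (m + 1) (Function.update x (m + 2) a) (Function.update y (m + 1) b) := by
  refine ⟨fun g hg1 hg2 => ?_, fun g hg1 hg2 => ?_⟩
  · rcases (show g ≤ m ∨ g = m + 1 by omega) with hg | rfl
    · rw [Function.update_of_ne (by omega), Function.update_of_ne (by omega),
        Function.update_of_ne (by omega)]
      exact hw.1 g hg1 (by omega)
    · rw [Function.update_of_ne (by omega), Function.update_self, Function.update_self]
      exact ⟨hb, ha, hlt⟩
  · rcases (show g ≤ m + 1 ∨ g = m + 2 by omega) with hg | rfl
    · rw [Function.update_of_ne (by omega)]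
      exact hw.2 g hg1 (by omega)
    · rwa [Function.update_self]

theorem IsAltWalk.exists_isAltChain_le (hw : IsAltWalk E s l x y) :
    ∃ (l' : ℕ) (x' : ℕ → Fin n) (y' : ℕ → β),
      IsAltChain n β E s (x 1) l' x' y' ∧ x' (l' + 1) ≤ x (l + 1) := by
  suffices ∀ e : Fin n, ∀ (l : ℕ) (x : ℕ → Fin n) (y : ℕ → β), x (l + 1) = e →
      IsAltWalk E s l x y → ∃ (l' : ℕ) (x' : ℕ → Fin n) (y' : ℕ → β),
        IsAltChain n β E s (x 1) l' x' y' ∧ x' (l' + 1) ≤ e from this _ l x y rfl hw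
  intro e
  induction e using WellFoundedLT.induction with
  | _ e ih =>
    rintro l x y rfl hw
    by_cases hmax : ∃ (b : β) (a : Fin n), E (x (l + 1)) b ∧ E a b ∧ a < x (l + 1) ∧ ¬ E a s
    · obtain ⟨b, a, hb, ha, hlt, has⟩ := hmax
      obtain ⟨l', x', y', hch, hle⟩ :=
        ih a hlt (l + 1) _ _ (Function.update_self ..) (hw.snoc le_rfl hb ha hlt has)
      rw [Function.update_of_ne (by omega)] at hch
      exact ⟨l', x', y', hch, hle.trans hlt.le⟩
    · exact ⟨l, x, y, ⟨rfl, hw.1, hw.2, hmax⟩, le_rfl⟩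

theorem IsAltWalk.prec_of_prec {k : β → Fin n} {t : β} (hw : IsAltWalk E s l x y) (hxt : E (x 1) t)
    {g : ℕ} (hg : 1 ≤ g) (hgl : g ≤ l) (hks : k s < x g) (hy : Prec n β E k (inr (y g)) (inr s)) :
    Prec n β E k (inr t) (inr s) := by
  induction g, hg using Nat.le_induction with
  | base => exact Prec.FB hy hks (hw.1 1 le_rfl hgl).1 hxt
  | succ g hg ih =>
    refine ih (by omega) (hks.trans_le (hw.antitone hg (by omega) (by omega))) ?_
    exact Prec.FB hy hks (hw.1 (g + 1) (by omega) hgl).1 (hw.1 g hg (by omega)).2.1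

end AltChain

section Limit

variable {n : ℕ} {β : Type} {E : Fin n → β → Prop} {k : β → Fin n} {one : β → Fin n}
  {r : (Fin n ⊕ β) → (Fin n ⊕ β) → Prop} {t s : β} {v : Fin n}

theorem exists_isLimit (h : ∃ a, E a t ∧ ¬ E a s) : ∃ v, IsLimit n β E t s v := by
  obtain ⟨c, ⟨hct, hcs⟩, hcmin⟩ := WellFounded.has_min wellFounded_lt {a | E a t ∧ ¬ E a s} h
  have hw : IsAltWalk E s 0 (fun _ => c) (fun _ => t) :=
    ⟨fun g _ hg => absurd hg (by omega), fun _ _ _ => hcs⟩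
  obtain ⟨l, x, y, hch, -⟩ := hw.exists_isAltChain_le
  obtain ⟨v, ⟨l, x, y, hch, rfl⟩, hvmin⟩ :=
    WellFounded.has_min wellFounded_lt
      {v | ∃ (l : ℕ) (x : ℕ → Fin n) (y : ℕ → β), IsAltChain n β E s c l x y ∧ x (l + 1) = v}
      ⟨_, l, x, y, hch, rfl⟩
  refine ⟨_, c, ⟨hct, hcs, fun i hit his => not_lt.1 (hcmin i ⟨hit, his⟩)⟩, ⟨l, x, y, hch, rfl⟩,
    fun l' x' y' hch' => not_lt.1 (hvmin _ ⟨l', x', y', hch', rfl⟩)⟩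

theorem IsLimit.rel_inl_inr (hr : IsAStickOrder n β E r) (hlim : IsLimit n β E t s v) :
    r (inl v) (inr t) := by
  obtain ⟨c, ⟨hct, -⟩, ⟨l, x, y, hch, rfl⟩, -⟩ := hlim
  exact hr.rel_inr_of_le hct hch.le_start

theorem IsAltWalk.k_lt (hk : ∀ j : β, E (k j) j ∧ ∀ i : Fin n, E i j → i ≤ k j)
    (hone : ∀ j : β, E (one j) j ∧ ∀ i : Fin n, E i j → one j ≤ i) (hN : NOverlap n β E)
    (hr : IsAStickOrder n β E r) (hts : r (inr t) (inr s))
    (hnp : ¬ Prec n β E k (inr t) (inr s)) {l : ℕ} {x : ℕ → Fin n} {y : ℕ → β}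
    (hw : IsAltWalk E s l x y) (hxt : E (x 1) t) (hks : k s < x 1) {g : ℕ} (hg : 1 ≤ g)
    (hgl : g ≤ l + 1) : k s < x g := by
  have := hr.1.1
  induction g, hg using Nat.le_induction with
  | base => exact hks
  | succ m hm ih =>
    have hksm := ih (by omega)
    obtain ⟨hxy, hx'y, -⟩ := hw.1 m hm (by omega)
    have hx's : ¬ E (x (m + 1)) s := hw.2 (m + 1) (by omega) hgl
    by_contra! hle
    have hlt : x (m + 1) < k s := hle.lt_of_ne fun h => hx's (h ▸ (hk s).1)
    -- Below `a_{1_s}`, the vertex `b_{y_m}` would violate N-overlap or the Stick condition;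
    -- above it, rule (TB) gives `b_{y_m} ≺° b_s`.
    rcases lt_trichotomy (x (m + 1)) (one s) with hx'o | hx'o | hx'o
    · have hys : y m ≠ s := fun h => hw.2 m hm (by omega) (h ▸ hxy)
      rcases trichotomous_of r (inr (y m)) (inr s) with h | h | h
      · refine hN s (y m) hys.symm fun a has => hr.adj_of_lt (hx'o.trans_le ((hone s).2 a has))
          ?_ h hx'y has
        exact hr.rel_inr_of_le hxy (((hk s).2 a has).trans hksm.le)
      · exact hys (inr_injective h)
      · have hxt' : r (inl (x m)) (inr t) :=
          hr.rel_inr_of_le (hk t).1 ((hw.antitone le_rfl hm (by omega)).trans ((hk t).2 _ hxt))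
        exact hw.2 m hm (by omega) (hr.adj_of_lt (((hone s).2 _ (hk s).1).trans_lt hksm)
          (trans_of r hxt' hts) h (hone s).1 hxy)
    · exact hx's (hx'o ▸ (hone s).1)
    · exact hnp (hw.prec_of_prec hxt hm (by omega) hksm
        (Prec.TB hx'o hlt (hone s).1 hx's hx'y))

theorem IsLimit.k_lt (hk : ∀ j : β, E (k j) j ∧ ∀ i : Fin n, E i j → i ≤ k j)
    (hone : ∀ j : β, E (one j) j ∧ ∀ i : Fin n, E i j → one j ≤ i) (hN : NOverlap n β E)
    (hr : IsAStickOrder n β E r) (hts : r (inr t) (inr s)) (hos : one s ≤ one t)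
    (hnp : ¬ Prec n β E k (inr t) (inr s)) (hlim : IsLimit n β E t s v) : k s < v := by
  obtain ⟨c, ⟨hct, hcs, -⟩, ⟨l, x, y, hch, rfl⟩, -⟩ := hlim
  have hoc : one s < c :=
    (hos.trans ((hone t).2 c hct)).lt_of_ne fun h => hcs (h ▸ (hone s).1)
  have hkc : k s < c := by
    rcases lt_trichotomy c (k s) with h | h | h
    · exact absurd (Prec.TB hoc h (hone s).1 hcs hct) hnp
    · exact absurd (h ▸ (hk s).1) hcs
    · exact h
  exact hch.isAltWalk.k_lt hk hone hN hr hts hnp (hch.1 ▸ hct) (hch.1 ▸ hkc) (by omega) le_rfl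

theorem IsLimit.adj_of_between (hr : IsAStickOrder n β E r)
    (hconsec : ¬ ∃ u : β, r (inr t) (inr u) ∧ r (inr u) (inr s)) (hlim : IsLimit n β E t s v)
    {a : Fin n} {b : β} (hab : E a b) (hav : a < v) (hvb : r (inl v) (inr b))
    (hbs : r (inr b) (inr s)) : E a s := by
  have := hr.1.1
  obtain ⟨c, ⟨hct, hcs, hcmin⟩, ⟨l, x, y, hch, rfl⟩, hvmin⟩ := hlim
  have hw := hch.isAltWalk
  -- Otherwise `b` extends a prefix of the chain ending in `a_v` to a chain ending below `a_v`,
  -- or `b` forms a forbidden configuration with the chain.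
  by_contra has
  have hbt : r (inr b) (inr t) := by
    rcases trichotomous_of r (inr b) (inr t) with h | h | h
    · exact h
    · cases inr_injective h
      exact (lt_irrefl _ ((hcmin a hab has).trans_lt (hav.trans_le hch.le_start))).elim
    · exact absurd ⟨b, h, hbs⟩ hconsec
  have hnb : ∀ g, 1 ≤ g → g ≤ l + 1 → ¬ E (x g) b := by
    intro g hg hgl hxb
    obtain ⟨m, rfl⟩ : ∃ m, g = m + 1 := ⟨g - 1, by omega⟩
    have hax : a < x (m + 1) := hav.trans_le (hw.antitone hg hgl le_rfl)
    obtain ⟨l', x', y', hch', hle⟩ := (hw.snoc (by omega) hxb hab hax has).exists_isAltChain_le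
    rw [Function.update_of_ne (by omega), hch.1] at hch'
    rw [Function.update_self] at hle
    exact absurd (hvmin l' x' y' hch') (not_le.2 (hle.trans_lt hav))
  have hbx : ∀ g, 1 ≤ g → g ≤ l + 1 → r (inr b) (inl (x g)) := by
    intro g hg hgl
    induction g, hg using Nat.le_induction with
    | base =>
      rcases trichotomous_of r (inr b) (inl (x 1)) with h | h | h
      · exact h
      · exact absurd h inr_ne_inl
      · exact absurd (hr.adj_of_lt (hch.1 ▸ hav.trans_le hch.le_start) h hbt hab
          (hch.1 ▸ hct)) (hnb 1 le_rfl hgl)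
    | succ g hg ih =>
      rcases trichotomous_of r (inr b) (inl (x (g + 1))) with h | h | h
      · exact h
      · exact absurd h inr_ne_inl
      · obtain ⟨hxy, hx'y, -⟩ := hw.1 g hg (by omega)
        exact absurd (hr.adj_of_lt (hav.trans_le (hw.antitone (by omega) hgl le_rfl)) h
          (trans_of r (ih (by omega)) (hr.1.2.1 _ _ hxy)) hab hx'y) (hnb (g + 1) (by omega) hgl)
  exact asymm_of r hvb (hbx (l + 1) (by omega) le_rfl)

end Limit

section SwapCondition

variable {n : ℕ} {β : Type} [Fintype β] {E : Fin n → β → Prop} {k : β → Fin n}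
  {one : β → Fin n} {r : (Fin n ⊕ β) → (Fin n ⊕ β) → Prop} {t s : β}

theorem GoodSwap.le_and_not_prec (hk : ∀ j : β, E (k j) j ∧ ∀ i : Fin n, E i j → i ≤ k j)
    (hone : ∀ j : β, E (one j) j ∧ ∀ i : Fin n, E i j → one j ≤ i)
    (hgood : GoodSwap n β E one r t s) :
    one s ≤ one t ∧ ¬ Prec n β E k (inr t) (inr s) := by
  obtain ⟨v, hlim, hr', -⟩ := hgood
  have := hr'.1.1
  have hsv : moveBefore n β r s v (inr s) (inl v) := moveBefore_self_left.2 ⟨by simp, Or.inl rfl⟩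
  refine ⟨not_lt.1 fun hlt => ?_, fun hp => ?_⟩
  · obtain ⟨c, ⟨-, -, hcmin⟩, ⟨l, x, y, hch, rfl⟩, -⟩ := hlim
    have hots : ¬ E (one t) s := fun h => absurd ((hone s).2 _ h) (not_le.2 hlt)
    have hvo : x (l + 1) < one s := hch.le_start.trans_lt ((hcmin _ (hone t).1 hots).trans_lt hlt)
    exact irrefl_of _ _ (trans_of _ (trans_of _ (hr'.1.2.1 _ _ (hone s).1) hsv)
      ((hr'.2 _ _).2 hvo))
  · exact irrefl_of _ _ (trans_of _ (trans_of _ (hp.sound hk hr') hsv) (hlim.rel_inl_inr hr'))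

theorem goodSwap_of_le_of_not_prec (hk : ∀ j : β, E (k j) j ∧ ∀ i : Fin n, E i j → i ≤ k j)
    (hone : ∀ j : β, E (one j) j ∧ ∀ i : Fin n, E i j → one j ≤ i) (hN : NOverlap n β E)
    (hr : IsAStickOrder n β E r) (hts : r (inr t) (inr s))
    (hconsec : ¬ ∃ u : β, r (inr t) (inr u) ∧ r (inr u) (inr s))
    (hos : one s ≤ one t) (hnp : ¬ Prec n β E k (inr t) (inr s)) :
    GoodSwap n β E one r t s := by
  have := hr.1.1
  have hst : s ≠ t := by rintro rfl; exact irrefl_of r _ hts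
  obtain ⟨v, hlim⟩ := exists_isLimit (by simpa using hN t s hst.symm)
  have hks := hlim.k_lt hk hone hN hr hts hos hnp
  have hvs : r (inl v) (inr s) := trans_of r (hlim.rel_inl_inr hr) hts
  have hEs : ∀ a, E a s → r (inl a) (inl v) := fun a has =>
    (hr.2 a v).2 (((hk s).2 a has).trans_lt hks)
  have hbetween : ∀ a b, E a b → r (inl a) (inl v) → r (inl v) (inr b) → r (inr b) (inr s) →
      E a s := fun a b hab hav hvb hbs =>
    hlim.adj_of_between hr hconsec hab ((hr.2 a v).1 hav) hvb hbs
  exact ⟨v, hlim, hr.moveBefore hvs hEs hbetween,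
    lengthOf_moveBefore_lt hvs (hEs _ (hone s).1) hr.1.2.1 hEs hbetween⟩

end SwapCondition

theorem stmt13_general (n : ℕ) (β : Type) [Fintype β] (E : Fin n → β → Prop) (k : β → Fin n)
    (hk : ∀ j : β, E (k j) j ∧ ∀ i : Fin n, E i j → i ≤ k j)
    (one : β → Fin n)
    (hone : ∀ j : β, E (one j) j ∧ ∀ i : Fin n, E i j → one j ≤ i)
    (hN : NOverlap n β E)
    (r : (Fin n ⊕ β) → (Fin n ⊕ β) → Prop)
    (hr : IsAStickOrder n β E r)
    (t s : β) (hts : r (inr t) (inr s))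
    (hconsec : ¬ ∃ u : β, r (inr t) (inr u) ∧ r (inr u) (inr s)) :
    GoodSwap n β E one r t s ↔
      (one s ≤ one t ∧ ¬ Prec n β E k (inr t) (inr s)) :=
  ⟨GoodSwap.le_and_not_prec hk hone, fun ⟨hos, hnp⟩ =>
    goodSwap_of_le_of_not_prec hk hone hN hr hts hconsec hos hnp⟩

/-- Let `G` be an A-Stick N-overlap graph with no isolated vertices, `≺` an
A-Stick order of `G`, and `b_t ≺ b_s` consecutive among `B` with respect to `≺`. Then the
swap of `b_t` and `b_s` is good iff `1_s ≤ 1_t` and `b_t ≺° b_s` does not hold. -/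
theorem stmt13 (n : ℕ) (β : Type) [Fintype β] (E : Fin n → β → Prop) (k : β → Fin n)
    (hk : ∀ j : β, E (k j) j ∧ ∀ i : Fin n, E i j → i ≤ k j)
    (one : β → Fin n)
    (hone : ∀ j : β, E (one j) j ∧ ∀ i : Fin n, E i j → one j ≤ i)
    (hN : NOverlap n β E)
    (hnoiso : ∀ a : Fin n, ∃ b : β, E a b)
    (r : (Fin n ⊕ β) → (Fin n ⊕ β) → Prop)
    (hr : IsAStickOrder n β E r)
    (t s : β) (hts : r (inr t) (inr s))
    (hconsec : ¬ ∃ u : β, r (inr t) (inr u) ∧ r (inr u) (inr s)) :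
    GoodSwap n β E one r t s ↔
      (one s ≤ one t ∧ ¬ Prec n β E k (inr t) (inr s)) :=
  stmt13_general n β E k hk one hone hN r hr t s hts hconsec
end

section
/- Let σ_B be a linear order on B and suppose G (with no isolated vertices) admits an AB-Stick order, i.e. a Stick order whose restriction to A is the given order a_1 < … < a_n and whose restriction to B is σ_B. Then there exists an AB-Stick order ≺* such that for every AB-Stick order ≺ and every b ∈ B, the number of elements of A preceding b in ≺* is at most the number of elements of A preceding b in ≺; moreover, length(≺*) ≤ length(≺) for every AB-Stick order ≺. -/
open Sum

/-- An AB-Stick order: a Stick order whose restriction to `A` is the given order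
`a_1 < … < a_n` and whose restriction to `B` is `σ_B`. -/
def IsABStickOrder (n : ℕ) (β : Type) (E : Fin n → β → Prop) (sB : β → β → Prop)
    (r : (Fin n ⊕ β) → (Fin n ⊕ β) → Prop) : Prop :=
  IsStickOrder n β E r ∧ (∀ i j : Fin n, r (inl i) (inl j) ↔ i < j) ∧
    ∀ p q : β, r (inr p) (inr q) ↔ sB p q


/-! Every `b` is placed as far to the left as the constraints allow: if `c` is `b` or precedes
`b` in `σ_B` and `a_j c ∈ E`, then `a_i ≺ a_j ≺ c ≼ b` for every `i ≤ j` in any AB-Stick order.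
So at least `t(b) = 1 + max {j | a_j c ∈ E, c ≼ b}` vertices of `A` precede `b`, and the order
placing exactly `a_0, …, a_{t(b)-1}` before `b` is again an AB-Stick order, because a forbidden
configuration in it is one in every AB-Stick order. In it each interval `[a, b)` is contained in
the corresponding interval of any AB-Stick order, which bounds every segment length. -/

section RelInterval

variable {α : Type*} {r s : α → α → Prop}

def relIco (r : α → α → Prop) (v u : α) : Set α := {w | (w = v ∨ r v w) ∧ r w u}

theorem ncard_rel_le_add_ncard_relIco [Finite α] [Std.Trichotomous r] (v u : α) :
    {w | r w u}.ncard ≤ {w | r w v}.ncard + (relIco r v u).ncard := by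
  refine (Set.ncard_le_ncard ?_).trans (Set.ncard_union_le _ _)
  intro w hw
  rcases trichotomous_of r w v with h | h | h
  exacts [Or.inl h, Or.inr ⟨Or.inl h, hw⟩, Or.inr ⟨Or.inr h, hw⟩]

theorem ncard_rel_eq_add_ncard_relIco [Finite α] [IsStrictTotalOrder α r] {v u : α}
    (h : r v u) : {w | r w u}.ncard = {w | r w v}.ncard + (relIco r v u).ncard := by
  refine le_antisymm (ncard_rel_le_add_ncard_relIco v u) ?_
  have hdisj : Disjoint {w | r w v} (relIco r v u) :=
    Set.disjoint_left.2 fun w hwv ⟨hw, _⟩ =>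
      hw.elim (fun e => irrefl v (e ▸ hwv)) (fun hvw => irrefl w (_root_.trans hwv hvw))
  rw [← Set.ncard_union_eq hdisj]
  refine Set.ncard_le_ncard ?_
  rintro w (hw | ⟨-, hw⟩)
  exacts [_root_.trans hw h, hw]

theorem ncard_rel_sub_le_of_relIco_subset [Finite α] [Std.Trichotomous r]
    [IsStrictTotalOrder α s] {v u : α} (h : relIco r v u ⊆ relIco s v u) :
    {w | r w u}.ncard - {w | r w v}.ncard ≤ {w | s w u}.ncard - {w | s w v}.ncard := by
  have hr := ncard_rel_le_add_ncard_relIco (r := r) v u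
  have hsub := Set.ncard_le_ncard h
  by_cases hvu : s v u
  · have := ncard_rel_eq_add_ncard_relIco hvu
    omega
  · have hempty : relIco s v u = ∅ :=
      Set.eq_empty_iff_forall_notMem.2 fun w ⟨hw, hwu⟩ =>
        hvu (hw.elim (· ▸ hwu) (_root_.trans · hwu))
    rw [hempty, Set.ncard_empty] at hsub
    omega

end RelInterval

section ThresholdOrder

variable {n : ℕ} {β : Type}

def thresholdOrder (t : β → ℕ) (sB : β → β → Prop) : Fin n ⊕ β → Fin n ⊕ β → Prop
  | inl i, inl j => i < j
  | inl i, inr b => (i : ℕ) < t b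
  | inr b, inl i => t b ≤ (i : ℕ)
  | inr b, inr c => sB b c

instance thresholdOrder.trichotomous {t : β → ℕ} {sB : β → β → Prop} [Std.Trichotomous sB] :
    Std.Trichotomous (thresholdOrder (n := n) t sB) where
  trichotomous
    | inl _, inl _, h₁, h₂ => congrArg inl (le_antisymm (not_lt.1 h₂) (not_lt.1 h₁))
    | inl _, inr _, h₁, h₂ => absurd (lt_of_not_ge h₂) h₁
    | inr _, inl _, h₁, h₂ => absurd (lt_of_not_ge h₁) h₂
    | inr b, inr c, h₁, h₂ => congrArg inr (Std.Trichotomous.trichotomous b c h₁ h₂)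

theorem isStrictTotalOrder_thresholdOrder {t : β → ℕ} {sB : β → β → Prop}
    [IsStrictTotalOrder β sB] (ht : ∀ b c, sB b c → t b ≤ t c) :
    IsStrictTotalOrder (Fin n ⊕ β) (thresholdOrder t sB) where
  irrefl
    | inl i => lt_irrefl i
    | inr b => irrefl b
  trans := by
    rintro (i | b) (j | c) (k | d) h₁ h₂ <;>
      simp only [thresholdOrder, Fin.lt_def] at h₁ h₂ ⊢
    · omega
    · omega
    · omega
    · have := ht c d h₂
      omega
    · omega
    · rcases trichotomous_of sB b d with hbd | rfl | hdb
      · exact hbd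
      · omega
      · have := ht d b hdb
        omega
    · have := ht b c h₁
      omega
    · exact _root_.trans h₁ h₂

theorem IsABStickOrder.isStrictTotalOrder_sB {E : Fin n → β → Prop} {sB : β → β → Prop}
    {r : Fin n ⊕ β → Fin n ⊕ β → Prop} (hr : IsABStickOrder n β E sB r) :
    IsStrictTotalOrder β sB :=
  have := hr.1.1
  (⟨⟨inr, inr_injective⟩, hr.2.2 _ _⟩ : sB ↪r r).isStrictTotalOrder

end ThresholdOrder

section Leftmost

variable {n : ℕ} {β : Type} [Fintype β] {E : Fin n → β → Prop} {sB : β → β → Prop}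
  {r : Fin n ⊕ β → Fin n ⊕ β → Prop}

open Classical in
noncomputable def stickThreshold (E : Fin n → β → Prop) (sB : β → β → Prop) (b : β) : ℕ :=
  (Finset.univ.filter fun p : Fin n × β => E p.1 p.2 ∧ (sB p.2 b ∨ p.2 = b)).sup
    fun p => p.1 + 1

theorem lt_stickThreshold_iff {i : Fin n} {b : β} :
    (i : ℕ) < stickThreshold E sB b ↔ ∃ j c, i ≤ j ∧ E j c ∧ (sB c b ∨ c = b) := by
  simp only [stickThreshold, Finset.lt_sup_iff, Finset.mem_filter, Finset.mem_univ, true_and,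
    Prod.exists, Nat.lt_succ_iff, Fin.le_def]
  grind

theorem stickThreshold_mono [IsTrans β sB] {b c : β} (h : sB b c) :
    stickThreshold E sB b ≤ stickThreshold E sB c := by
  classical
  refine Finset.sup_mono fun p hp => ?_
  simp only [Finset.mem_filter, Finset.mem_univ, true_and] at hp ⊢
  obtain ⟨hE, hpb | rfl⟩ := hp
  exacts [⟨hE, Or.inl (_root_.trans hpb h)⟩, ⟨hE, Or.inl h⟩]

noncomputable abbrev leftmostOrder (E : Fin n → β → Prop) (sB : β → β → Prop) :
    Fin n ⊕ β → Fin n ⊕ β → Prop :=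
  thresholdOrder (stickThreshold E sB) sB

namespace IsABStickOrder

theorem rel_of_lt_stickThreshold (hr : IsABStickOrder n β E sB r) {i : Fin n} {b : β}
    (h : (i : ℕ) < stickThreshold E sB b) : r (inl i) (inr b) := by
  have := hr.1.1
  obtain ⟨j, c, hij, hjc, hcb⟩ := lt_stickThreshold_iff.1 h
  have hic : r (inl i) (inr c) := by
    rcases hij.lt_or_eq with hlt | rfl
    · exact _root_.trans ((hr.2.1 i j).2 hlt) (hr.1.2.1 j c hjc)
    · exact hr.1.2.1 i c hjc
  rcases hcb with hcb | rfl
  exacts [_root_.trans hic ((hr.2.2 c b).2 hcb), hic]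

theorem relIco_leftmostOrder_subset (hr : IsABStickOrder n β E sB r) (i : Fin n) (b : β) :
    relIco (leftmostOrder E sB) (inl i) (inr b) ⊆ relIco r (inl i) (inr b) := by
  rintro w ⟨hiw, hwb⟩
  refine ⟨hiw.imp_right ?_, ?_⟩
  · rcases w with j | c
    exacts [(hr.2.1 i j).2, hr.rel_of_lt_stickThreshold]
  · rcases w with j | c
    exacts [hr.rel_of_lt_stickThreshold hwb, (hr.2.2 c b).2 hwb]

theorem rankOf_sub_rankOf_leftmostOrder_le (hr : IsABStickOrder n β E sB r) (i : Fin n)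
    (b : β) :
    rankOf n β (leftmostOrder E sB) (inr b) - rankOf n β (leftmostOrder E sB) (inl i) ≤
      rankOf n β r (inr b) - rankOf n β r (inl i) :=
  haveI := hr.isStrictTotalOrder_sB
  haveI := hr.1.1
  ncard_rel_sub_le_of_relIco_subset (hr.relIco_leftmostOrder_subset i b)

theorem ncard_leftmostOrder_le (hr : IsABStickOrder n β E sB r) (b : β) :
    {a : Fin n | leftmostOrder E sB (inl a) (inr b)}.ncard ≤
      {a : Fin n | r (inl a) (inr b)}.ncard :=
  Set.ncard_le_ncard fun _ => hr.rel_of_lt_stickThreshold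

theorem lengthOf_leftmostOrder_le (hr : IsABStickOrder n β E sB r) (one : β → Fin n) :
    lengthOf n β E one (leftmostOrder E sB) ≤ lengthOf n β E one r := by
  set R := leftmostOrder E sB
  unfold lengthOf
  refine add_le_add (Finset.sum_le_sum fun b _ => ?_) (Finset.sum_le_sum fun a _ => ?_)
  · exact hr.rankOf_sub_rankOf_leftmostOrder_le (one b) b
  · refine tsub_le_iff_right.2 (Finset.sup_le fun b hb => ?_)
    calc rankOf n β R (inr b)
        ≤ rankOf n β R (inr b) - rankOf n β R (inl a) + rankOf n β R (inl a) := le_tsub_add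
      _ ≤ rankOf n β r (inr b) - rankOf n β r (inl a) + rankOf n β R (inl a) :=
          Nat.add_le_add_right (hr.rankOf_sub_rankOf_leftmostOrder_le a b) _
      _ ≤ _ := Nat.add_le_add_right
          (Nat.sub_le_sub_right (Finset.le_sup (f := fun b => rankOf n β r (inr b)) hb) _) _

end IsABStickOrder

theorem isABStickOrder_leftmostOrder {r₀ : Fin n ⊕ β → Fin n ⊕ β → Prop}
    (hr₀ : IsABStickOrder n β E sB r₀) : IsABStickOrder n β E sB (leftmostOrder E sB) := by
  have := hr₀.isStrictTotalOrder_sB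
  refine ⟨⟨isStrictTotalOrder_thresholdOrder fun _ _ => stickThreshold_mono, ?_, ?_⟩,
    fun _ _ => Iff.rfl, fun _ _ => Iff.rfl⟩
  · exact fun a b hab => lt_stickThreshold_iff.2 ⟨a, b, le_rfl, hab, Or.inr rfl⟩
  · rintro ⟨a, a', b, b', ha'a, hab, hbb', hforb⟩
    exact hr₀.1.2.2 ⟨a, a', b, b', (hr₀.2.1 a' a).2 ha'a, hr₀.rel_of_lt_stickThreshold hab,
      (hr₀.2.2 b b').2 hbb', hforb⟩

end Leftmost

theorem stmt17_general (n : ℕ) (β : Type) [Fintype β] (E : Fin n → β → Prop)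
    (one : β → Fin n)
    (sB : β → β → Prop)
    (hex : ∃ r, IsABStickOrder n β E sB r) :
    ∃ rstar, IsABStickOrder n β E sB rstar ∧
      ∀ r, IsABStickOrder n β E sB r →
        (∀ b : β, Set.ncard {a : Fin n | rstar (inl a) (inr b)} ≤
          Set.ncard {a : Fin n | r (inl a) (inr b)}) ∧
        lengthOf n β E one rstar ≤ lengthOf n β E one r := by
  obtain ⟨r₀, hr₀⟩ := hex
  exact ⟨leftmostOrder E sB, isABStickOrder_leftmostOrder hr₀, fun r hr =>
    ⟨hr.ncard_leftmostOrder_le, hr.lengthOf_leftmostOrder_le one⟩⟩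

/-- If `G` (with no isolated vertices) admits an AB-Stick order, then there
is an AB-Stick order `≺*` in which every `b ∈ B` is preceded by at most as many elements of
`A` as in any AB-Stick order `≺`; moreover `length(≺*) ≤ length(≺)` for every AB-Stick
order `≺`. -/
theorem stmt17 (n : ℕ) (β : Type) [Fintype β] (E : Fin n → β → Prop)
    (one : β → Fin n)
    (hone : ∀ j : β, E (one j) j ∧ ∀ i : Fin n, E i j → one j ≤ i)
    (hnoiso : ∀ a : Fin n, ∃ b : β, E a b)
    (sB : β → β → Prop) (hsB : IsStrictTotalOrder β sB)
    (hex : ∃ r, IsABStickOrder n β E sB r) :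
    ∃ rstar, IsABStickOrder n β E sB rstar ∧
      ∀ r, IsABStickOrder n β E sB r →
        (∀ b : β, Set.ncard {a : Fin n | rstar (inl a) (inr b)} ≤
          Set.ncard {a : Fin n | r (inl a) (inr b)}) ∧
        lengthOf n β E one rstar ≤ lengthOf n β E one r :=
  stmt17_general n β E one sB hex
end
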